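/- arXiv:2112.09279 — 6 statements merged into one kernel-verified Lean document; each statement's English description precedes it below -/
import Mathlib

section
/- Let ρ ≥ 0, let p ∈ [1, ∞] and let q be its conjugate exponent (1/p + 1/q = 1), and let U = {δ ∈ ℝ^M : ‖δ‖_p ≤ ρ}. Then for every x ∈ ℝ^M, sup_{δ ∈ U} c_kᵀ z²(x + δ) = sup_{s ∈ [0,1]^r} inf_{t ∈ [0,1]^r} ( ρ ‖(p̂ − q̂)ᵀ W¹‖_q + (p̂ − q̂)ᵀ (W¹x + b¹) + c_kᵀ b² ), where p̂ = [(W²)ᵀ c_k]⁺ ⊙ s and q̂ = [−(W²)ᵀ c_k]⁺ ⊙ t, and ‖v‖_q denotes the ℓ^q norm of the vector v ∈ ℝ^M. -/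
/-!
For a fixed perturbation, each ReLU unit is a saddle value:
`v [z]⁺ = max_{s ∈ [0,1]} min_{t ∈ [0,1]} (v⁺ s - v⁻ t) z`, with the activation pattern
`s = t = 1[z ≥ 0]` optimal on both sides. The adversarial objective is therefore
`sup_s sup_δ inf_t` of a function that is affine in `t` and in `δ`. Sion's minimax theorem, on the
compact box of `t`'s, exchanges `sup_δ` and `inf_t`, and Hölder duality evaluates the remaining
supremum of the linear functional `δ ↦ wᵀδ` over the `ℓ^p` ball of radius `ρ` as `ρ ‖w‖_q`.
-/

open scoped ENNReal

/-- `c_k := e_k - e_y`. -/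
def cVec {K : ℕ} (y k : Fin K) : Fin K → ℝ :=
  fun i => (if i = k then 1 else 0) - (if i = y then 1 else 0)

open scoped Matrix
open Set Matrix WithLp

theorem iInf_iSup_coe_eq_iSup_iInf_coe {E F : Type*}
    [TopologicalSpace E] [AddCommGroup E] [Module ℝ E] [IsTopologicalAddGroup E]
    [ContinuousSMul ℝ E] [TopologicalSpace F] [AddCommGroup F] [Module ℝ F]
    [IsTopologicalAddGroup F] [ContinuousSMul ℝ F]
    {X : Set E} {Y : Set F} (hX : X.Nonempty) (hXc : Convex ℝ X) (hXk : IsCompact X)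
    (hYc : Convex ℝ Y) {f : E → F → ℝ}
    (hf_left : ∀ y ∈ Y, ContinuousOn (f · y) X) (hf_convex : ∀ y ∈ Y, ConvexOn ℝ X (f · y))
    (hf_right : ∀ x ∈ X, ContinuousOn (f x) Y) (hf_concave : ∀ x ∈ X, ConcaveOn ℝ Y (f x)) :
    ⨅ x ∈ X, ⨆ y ∈ Y, (f x y : EReal) = ⨆ y ∈ Y, ⨅ x ∈ X, (f x y : EReal) :=
  Sion.minimax' hX hXc hXk
    (fun y hy =>
      (continuous_coe_real_ereal.comp_continuousOn (hf_left y hy)).lowerSemicontinuousOn)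
    (fun y hy => (hf_convex y hy).quasiconvexOn.monotone_comp (g := ((↑) : ℝ → EReal))
      EReal.coe_strictMono.monotone)
    hYc
    (fun x hx =>
      (continuous_coe_real_ereal.comp_continuousOn (hf_right x hx)).upperSemicontinuousOn)
    (fun x hx => (hf_concave x hx).quasiconcaveOn.monotone_comp (g := ((↑) : ℝ → EReal))
      EReal.coe_strictMono.monotone)

lemma biSup_coe_eq_of_isGreatest {α : Type*} {s : Set α} {f : α → ℝ} {m : ℝ}
    (h : IsGreatest (f '' s) m) : ⨆ x ∈ s, (f x : EReal) = m := by
  obtain ⟨⟨x, hx, rfl⟩, hmax⟩ := h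
  exact le_antisymm (iSup₂_le fun y hy => EReal.coe_le_coe (hmax ⟨y, hy, rfl⟩))
    (le_iSup₂_of_le x hx le_rfl)

lemma ENNReal.HolderConjugate.trichotomy (p q : ℝ≥0∞) [p.HolderConjugate q] :
    (p = 1 ∧ q = ∞) ∨ (p = ∞ ∧ q = 1) ∨ p.toReal.HolderConjugate q.toReal := by
  by_cases hp : p = ∞
  · exact Or.inr (Or.inl ⟨hp, (eq_top_iff_eq_one p q).1 hp⟩)
  by_cases hq : q = ∞
  · exact Or.inl ⟨(eq_top_iff_eq_one q p).1 hq, hq⟩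
  exact Or.inr (Or.inr (toReal_of_ne_top hp hq))

lemma abs_sign_le_one (x : ℝ) : |(SignType.sign x : ℝ)| ≤ 1 := by
  cases SignType.sign x <;> simp

variable {ι κ : Type*} [Fintype ι] [Fintype κ]

lemma convexOn_dotProduct_add (w : ι → ℝ) (c : ℝ) {s : Set (ι → ℝ)} (hs : Convex ℝ s) :
    ConvexOn ℝ s fun x => w ⬝ᵥ x + c :=
  ((dotProductBilin ℝ ℝ w).convexOn hs).add (convexOn_const c hs)

lemma concaveOn_dotProduct_add (w : ι → ℝ) (c : ℝ) {s : Set (ι → ℝ)} (hs : Convex ℝ s) :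
    ConcaveOn ℝ s fun x => w ⬝ᵥ x + c :=
  ((dotProductBilin ℝ ℝ w).concaveOn hs).add (concaveOn_const c hs)

lemma convex_setOf_norm_toLp_le (p : ℝ≥0∞) [Fact (1 ≤ p)] (ρ : ℝ) :
    Convex ℝ {δ : ι → ℝ | ‖toLp p δ‖ ≤ ρ} := by
  have : {δ : ι → ℝ | ‖toLp p δ‖ ≤ ρ} =
      (WithLp.linearEquiv p ℝ (ι → ℝ)).symm ⁻¹' Metric.closedBall 0 ρ := by
    ext; simp
  rw [this]
  exact (convex_closedBall 0 ρ).linear_preimage _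

lemma norm_toLp_one_eq_sum_abs (w : ι → ℝ) : ‖toLp 1 w‖ = ∑ i, |w i| := by
  simp [PiLp.norm_eq_sum (p := 1) (by simp), Real.norm_eq_abs]

lemma dotProduct_le_norm_top_mul_norm_one (w δ : ι → ℝ) :
    w ⬝ᵥ δ ≤ ‖toLp ∞ w‖ * ‖toLp 1 δ‖ := by
  rw [PiLp.norm_toLp, norm_toLp_one_eq_sum_abs, Finset.mul_sum]
  refine Finset.sum_le_sum fun i _ => ?_
  calc w i * δ i ≤ |w i| * |δ i| := by rw [← abs_mul]; exact le_abs_self _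
    _ ≤ ‖w‖ * |δ i| := by gcongr; exact norm_le_pi_norm w i

theorem dotProduct_le_norm_mul_norm (p q : ℝ≥0∞) [p.HolderConjugate q] (w δ : ι → ℝ) :
    w ⬝ᵥ δ ≤ ‖toLp q w‖ * ‖toLp p δ‖ := by
  rcases ENNReal.HolderConjugate.trichotomy p q with ⟨rfl, rfl⟩ | ⟨rfl, rfl⟩ | hpq
  · exact dotProduct_le_norm_top_mul_norm_one w δ
  · rw [dotProduct_comm, mul_comm]
    exact dotProduct_le_norm_top_mul_norm_one δ w
  · rw [PiLp.norm_eq_sum hpq.symm.pos, PiLp.norm_eq_sum hpq.pos]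
    simpa [dotProduct, Real.norm_eq_abs] using Real.inner_le_Lp_mul_Lq Finset.univ w δ hpq.symm

lemma exists_norm_le_one_and_norm_le_dotProduct_one_top (w : ι → ℝ) :
    ∃ δ : ι → ℝ, ‖toLp 1 δ‖ ≤ 1 ∧ ‖toLp ∞ w‖ ≤ w ⬝ᵥ δ := by
  classical
  rcases isEmpty_or_nonempty ι with hι | hι
  · exact ⟨0, by simp, by simp [Subsingleton.elim w 0]⟩
  obtain ⟨i, -, hi⟩ := Finset.exists_max_image Finset.univ (fun i => |w i|) Finset.univ_nonempty
  refine ⟨Pi.single i (SignType.sign (w i)), ?_, ?_⟩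
  · rw [PiLp.toLp_single, PiLp.norm_single, Real.norm_eq_abs]
    exact abs_sign_le_one _
  · rw [dotProduct_single, self_mul_sign, PiLp.norm_toLp]
    exact (pi_norm_le_iff_of_nonneg (abs_nonneg _)).2 fun j => hi j (Finset.mem_univ j)

lemma exists_norm_le_one_and_norm_le_dotProduct_top_one (w : ι → ℝ) :
    ∃ δ : ι → ℝ, ‖toLp ∞ δ‖ ≤ 1 ∧ ‖toLp 1 w‖ ≤ w ⬝ᵥ δ := by
  refine ⟨fun i => SignType.sign (w i), ?_, ?_⟩
  · rw [PiLp.norm_toLp]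
    exact (pi_norm_le_iff_of_nonneg zero_le_one).2 fun i => abs_sign_le_one _
  · simp [norm_toLp_one_eq_sum_abs, dotProduct, self_mul_sign]

lemma exists_norm_le_one_and_norm_le_dotProduct_of_toReal {p q : ℝ≥0∞}
    (hpq : p.toReal.HolderConjugate q.toReal) (w : ι → ℝ) :
    ∃ δ : ι → ℝ, ‖toLp p δ‖ ≤ 1 ∧ ‖toLp q w‖ ≤ w ⬝ᵥ δ := by
  obtain ⟨⟨g, hg, hgw⟩, -⟩ := NNReal.isGreatest_Lp Finset.univ (fun i => ‖w i‖₊) hpq.symm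
  replace hg : ∑ i, (g i : ℝ) ^ p.toReal ≤ 1 := by exact_mod_cast hg
  replace hgw : ∑ i, |w i| * g i = (∑ i, |w i| ^ q.toReal) ^ (1 / q.toReal) := by
    simpa using congrArg NNReal.toReal hgw
  refine ⟨fun i => SignType.sign (w i) * g i, ?_, ?_⟩
  · rw [PiLp.norm_eq_sum hpq.pos]
    refine Real.rpow_le_one (by positivity) (le_trans ?_ hg) (by simp [hpq.pos.le])
    gcongr with i
    simp only [Real.norm_eq_abs, abs_mul, NNReal.abs_eq]
    exact mul_le_of_le_one_left (g i).2 (abs_sign_le_one _)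
  · simp [PiLp.norm_eq_sum hpq.symm.pos, dotProduct, ← mul_assoc, self_mul_sign, hgw]

theorem exists_norm_le_and_mul_norm_le_dotProduct (p q : ℝ≥0∞) [p.HolderConjugate q]
    (w : ι → ℝ) {ρ : ℝ} (hρ : 0 ≤ ρ) :
    ∃ δ : ι → ℝ, ‖toLp p δ‖ ≤ ρ ∧ ρ * ‖toLp q w‖ ≤ w ⬝ᵥ δ := by
  have : Fact (1 ≤ p) := ⟨ENNReal.HolderConjugate.one_le p q⟩
  obtain ⟨δ, hδ, hwδ⟩ : ∃ δ : ι → ℝ, ‖toLp p δ‖ ≤ 1 ∧ ‖toLp q w‖ ≤ w ⬝ᵥ δ := by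
    rcases ENNReal.HolderConjugate.trichotomy p q with ⟨rfl, rfl⟩ | ⟨rfl, rfl⟩ | hpq
    · exact exists_norm_le_one_and_norm_le_dotProduct_one_top w
    · exact exists_norm_le_one_and_norm_le_dotProduct_top_one w
    · exact exists_norm_le_one_and_norm_le_dotProduct_of_toReal hpq w
  refine ⟨ρ • δ, ?_, ?_⟩
  · rw [WithLp.toLp_smul, norm_smul, Real.norm_of_nonneg hρ]
    exact mul_le_of_le_one_right hρ hδ
  · rw [dotProduct_smul, smul_eq_mul]
    exact mul_le_mul_of_nonneg_left hwδ hρ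

theorem isGreatest_image_dotProduct_setOf_norm_toLp_le (p q : ℝ≥0∞) [p.HolderConjugate q]
    (w : ι → ℝ) {ρ : ℝ} (hρ : 0 ≤ ρ) :
    IsGreatest ((w ⬝ᵥ ·) '' {δ | ‖toLp p δ‖ ≤ ρ}) (ρ * ‖toLp q w‖) := by
  have : Fact (1 ≤ q) := ⟨ENNReal.HolderConjugate.one_le q p⟩
  have holder (δ) (hδ : ‖toLp p δ‖ ≤ ρ) : w ⬝ᵥ δ ≤ ρ * ‖toLp q w‖ :=
    (dotProduct_le_norm_mul_norm p q w δ).trans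
      (by rw [mul_comm]; exact mul_le_mul_of_nonneg_right hδ (norm_nonneg _))
  obtain ⟨δ, hδ, hwδ⟩ := exists_norm_le_and_mul_norm_le_dotProduct p q w hρ
  exact ⟨⟨δ, hδ, (holder δ hδ).antisymm hwδ⟩, by rintro _ ⟨δ, hδ, rfl⟩; exact holder δ hδ⟩

noncomputable def heaviside (z : ℝ) : ℝ := if 0 ≤ z then 1 else 0

lemma heaviside_mem_Icc (z : ℝ) : heaviside z ∈ Icc (0 : ℝ) 1 := by
  unfold heaviside; split_ifs <;> simp

lemma mul_posPart_le {v z t : ℝ} (ht : t ∈ Icc (0 : ℝ) 1) :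
    v * z⁺ ≤ (v⁺ * heaviside z - v⁻ * t) * z := by
  have hv := posPart_sub_negPart v
  have hv' := negPart_nonneg v
  rcases le_or_gt 0 z with hz | hz
  · rw [heaviside, if_pos hz, posPart_eq_self.2 hz]
    nlinarith [mul_nonneg (mul_nonneg hv' (sub_nonneg.2 ht.2)) hz]
  · rw [heaviside, if_neg hz.not_ge, posPart_eq_zero.2 hz.le]
    nlinarith [mul_nonneg hv' ht.1]

lemma le_mul_posPart {v z s : ℝ} (hs : s ∈ Icc (0 : ℝ) 1) :
    (v⁺ * s - v⁻ * heaviside z) * z ≤ v * z⁺ := by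
  have := mul_posPart_le (v := -v) (z := z) hs
  rw [posPart_neg, negPart_neg] at this
  linarith

theorem iSup_iInf_dotProduct_eq_dotProduct_posPart (v z : κ → ℝ) (C : ℝ) :
    ⨆ s ∈ Icc (0 : κ → ℝ) 1, ⨅ t ∈ Icc (0 : κ → ℝ) 1,
      (((v⁺ * s - v⁻ * t) ⬝ᵥ z + C : ℝ) : EReal) = ((v ⬝ᵥ z⁺ + C : ℝ) : EReal) := by
  have hpattern : (fun j => heaviside (z j)) ∈ Icc (0 : κ → ℝ) 1 :=
    ⟨fun j => (heaviside_mem_Icc _).1, fun j => (heaviside_mem_Icc _).2⟩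
  refine le_antisymm (iSup₂_le fun s hs => iInf₂_le_of_le _ hpattern ?_)
    (le_iSup₂_of_le _ hpattern (le_iInf₂ fun t ht => ?_))
  · rw [EReal.coe_le_coe_iff, add_le_add_iff_right]
    exact Finset.sum_le_sum fun j _ => le_mul_posPart ⟨hs.1 j, hs.2 j⟩
  · rw [EReal.coe_le_coe_iff, add_le_add_iff_right]
    exact Finset.sum_le_sum fun j _ => mul_posPart_le ⟨ht.1 j, ht.2 j⟩

theorem iSup_dotProduct_posPart_eq_iSup_iInf (p q : ℝ≥0∞) [p.HolderConjugate q]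
    (W : Matrix κ ι ℝ) (a v : κ → ℝ) (C : ℝ) {ρ : ℝ} (hρ : 0 ≤ ρ) :
    ⨆ δ ∈ {δ : ι → ℝ | ‖toLp p δ‖ ≤ ρ}, ((v ⬝ᵥ (a + W *ᵥ δ)⁺ + C : ℝ) : EReal) =
      ⨆ s ∈ Icc (0 : κ → ℝ) 1, ⨅ t ∈ Icc (0 : κ → ℝ) 1,
        ((ρ * ‖toLp q ((v⁺ * s - v⁻ * t) ᵥ* W)‖ + (v⁺ * s - v⁻ * t) ⬝ᵥ a + C : ℝ) : EReal) := by
  have : Fact (1 ≤ p) := ⟨ENNReal.HolderConjugate.one_le p q⟩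
  set B := {δ : ι → ℝ | ‖toLp p δ‖ ≤ ρ}
  set X := Icc (0 : κ → ℝ) 1
  set A : (κ → ℝ) → (κ → ℝ) → (ι → ℝ) → ℝ :=
    fun s t δ => (v⁺ * s - v⁻ * t) ⬝ᵥ (a + W *ᵥ δ) + C
  have hA_left (s δ) : (A s · δ) =
      fun t => (-(v⁻ * (a + W *ᵥ δ))) ⬝ᵥ t + ((v⁺ * s) ⬝ᵥ (a + W *ᵥ δ) + C) := by
    funext t
    simp only [A, dotProduct, Pi.sub_apply, Pi.mul_apply, Pi.neg_apply]
    rw [← add_assoc, ← Finset.sum_add_distrib]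
    exact congrArg (· + C) (Finset.sum_congr rfl fun j _ => by ring)
  have hA_right (s t) : A s t =
      fun δ => ((v⁺ * s - v⁻ * t) ᵥ* W) ⬝ᵥ δ + ((v⁺ * s - v⁻ * t) ⬝ᵥ a + C) := by
    funext δ
    simp only [A, dotProduct_add, dotProduct_mulVec]
    ring
  calc _ = ⨆ δ ∈ B, ⨆ s ∈ X, ⨅ t ∈ X, (A s t δ : EReal) :=
        iSup_congr fun δ => iSup_congr fun _ =>
          (iSup_iInf_dotProduct_eq_dotProduct_posPart v _ C).symm
    _ = ⨆ s ∈ X, ⨆ δ ∈ B, ⨅ t ∈ X, (A s t δ : EReal) := iSup₂_comm _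
    _ = ⨆ s ∈ X, ⨅ t ∈ X, ⨆ δ ∈ B, (A s t δ : EReal) := by
        refine iSup_congr fun s => iSup_congr fun _ => (iInf_iSup_coe_eq_iSup_iInf_coe ⟨0, by simp⟩
          (convex_Icc 0 1) isCompact_Icc (convex_setOf_norm_toLp_le p ρ) ?_ ?_ ?_ ?_).symm
        · intro δ _; rw [hA_left]; fun_prop
        · intro δ _; rw [hA_left]; exact convexOn_dotProduct_add _ _ (convex_Icc 0 1)
        · intro t _; rw [hA_right]; fun_prop
        · intro t _; rw [hA_right]
          exact concaveOn_dotProduct_add _ _ (convex_setOf_norm_toLp_le p ρ)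
    _ = _ := by
        refine iSup_congr fun s => iSup_congr fun _ => iInf_congr fun t => iInf_congr fun _ => ?_
        rw [hA_right, add_assoc]
        refine biSup_coe_eq_of_isGreatest ?_
        simpa only [image_image, id] using (monotone_id.add_const _).map_isGreatest
          (isGreatest_image_dotProduct_setOf_norm_toLp_le p q ((v⁺ * s - v⁻ * t) ᵥ* W) hρ)

theorem statement5_general (M K r : ℕ) (W1 : Fin r → Fin M → ℝ) (W2 : Fin K → Fin r → ℝ)
    (b1 : Fin r → ℝ) (b2 : Fin K → ℝ) (y k : Fin K)
    (ρ : ℝ) (hρ : 0 ≤ ρ) (p q : ℝ≥0∞)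
    (hpq : 1 / p + 1 / q = 1) (x : Fin M → ℝ) :
    (⨆ δ ∈ {δ : Fin M → ℝ | ‖(WithLp.equiv p (Fin M → ℝ)).symm δ‖ ≤ ρ},
        ((∑ i, cVec y k i *
            ((∑ j, W2 i j * max ((∑ i', W1 j i' * (x + δ) i') + b1 j) 0) + b2 i) : ℝ) : EReal)) =
      ⨆ s ∈ Set.Icc (0 : Fin r → ℝ) 1, ⨅ t ∈ Set.Icc (0 : Fin r → ℝ) 1,
        ((ρ * ‖(WithLp.equiv q (Fin M → ℝ)).symm
              (fun i => ∑ j, (max (∑ i', W2 i' j * cVec y k i') 0 * s j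
                  - max (-(∑ i', W2 i' j * cVec y k i')) 0 * t j) * W1 j i)‖
          + (∑ j, (max (∑ i', W2 i' j * cVec y k i') 0 * s j
                  - max (-(∑ i', W2 i' j * cVec y k i')) 0 * t j)
              * ((∑ i', W1 j i' * x i') + b1 j))
          + ∑ i, cVec y k i * b2 i : ℝ) : EReal) := by
  have : p.HolderConjugate q := ENNReal.holderConjugate_iff.2 (by simpa only [one_div] using hpq)
  -- `of` retypes the weight arrays as matrices, so that the `Matrix` lemmas rewrite.
  have hnet (δ : Fin M → ℝ) :
      ∑ i, cVec y k i * ((∑ j, W2 i j * max ((∑ i', W1 j i' * (x + δ) i') + b1 j) 0) + b2 i) =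
        ((of W2)ᵀ *ᵥ cVec y k) ⬝ᵥ (of W1 *ᵥ x + b1 + of W1 *ᵥ δ)⁺ + cVec y k ⬝ᵥ b2 := by
    change cVec y k ⬝ᵥ (of W2 *ᵥ (of W1 *ᵥ (x + δ) + b1)⁺ + b2) = _
    rw [dotProduct_add, dotProduct_mulVec, mulVec_transpose, mulVec_add, add_right_comm]
  simp only [hnet]
  exact iSup_dotProduct_posPart_eq_iSup_iInf p q (of W1) (of W1 *ᵥ x + b1)
    ((of W2)ᵀ *ᵥ cVec y k) (cVec y k ⬝ᵥ b2) hρ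

/-- Corollary 2 (two-layer case): for `U = {δ : ‖δ‖_p ≤ ρ}`, the adversarial objective
`sup_{δ ∈ U} c_kᵀ z²(x + δ)` equals a sup-inf over box variables `s, t` of
`ρ‖(p̂ - q̂)ᵀ W¹‖_q + (p̂ - q̂)ᵀ(W¹x + b¹) + c_kᵀ b²`, with `p̂ = [(W²)ᵀ c_k]⁺ ⊙ s`,
`q̂ = [-(W²)ᵀ c_k]⁺ ⊙ t`, and `q` the conjugate exponent of `p`. -/
theorem statement5 (M K r : ℕ) (W1 : Fin r → Fin M → ℝ) (W2 : Fin K → Fin r → ℝ)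
    (b1 : Fin r → ℝ) (b2 : Fin K → ℝ) (y k : Fin K)
    (ρ : ℝ) (hρ : 0 ≤ ρ) (p q : ℝ≥0∞) [Fact (1 ≤ p)] [Fact (1 ≤ q)]
    (hpq : 1 / p + 1 / q = 1) (x : Fin M → ℝ) :
    (⨆ δ ∈ {δ : Fin M → ℝ | ‖(WithLp.equiv p (Fin M → ℝ)).symm δ‖ ≤ ρ},
        ((∑ i, cVec y k i *
            ((∑ j, W2 i j * max ((∑ i', W1 j i' * (x + δ) i') + b1 j) 0) + b2 i) : ℝ) : EReal)) =
      ⨆ s ∈ Set.Icc (0 : Fin r → ℝ) 1, ⨅ t ∈ Set.Icc (0 : Fin r → ℝ) 1,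
        ((ρ * ‖(WithLp.equiv q (Fin M → ℝ)).symm
              (fun i => ∑ j, (max (∑ i', W2 i' j * cVec y k i') 0 * s j
                  - max (-(∑ i', W2 i' j * cVec y k i')) 0 * t j) * W1 j i)‖
          + (∑ j, (max (∑ i', W2 i' j * cVec y k i') 0 * s j
                  - max (-(∑ i', W2 i' j * cVec y k i')) 0 * t j)
              * ((∑ i', W1 j i' * x i') + b1 j))
          + ∑ i, cVec y k i * b2 i : ℝ) : EReal) :=
  statement5_general M K r W1 W2 b1 b2 y k ρ hρ p q hpq x
end

section
/- Let ρ ≥ 0 and x ∈ ℝ^M. Then sup_{δ : ‖δ‖₁ ≤ ρ} c_kᵀ z²(x + δ) ≤ inf_{t ∈ [0,1]^r} max_{m ∈ {1,…,M}} max{ g²_{k,m}(t, x, ρ), g²_{k,m}(t, x, −ρ) }, where g¹_m(x, a) = a W¹ e_m + W¹ x + b¹ (a ∈ ℝ, e_m the m-th standard basis vector of ℝ^M) and g²_{k,m}(t, x, a) = [c_kᵀ W²]⁺ [g¹_m(x, a)]⁺ − [−c_kᵀ W²]⁺ ( g¹_m(x, a) ⊙ t ) + c_kᵀ b². -/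
/-- `g¹_m(x, a) = a W¹ e_m + W¹ x + b¹`. -/
def gOne {M r : ℕ} (W1 : Fin r → Fin M → ℝ) (b1 : Fin r → ℝ) (x : Fin M → ℝ)
    (a : ℝ) (m : Fin M) : Fin r → ℝ :=
  fun j => a * W1 j m + ((∑ i', W1 j i' * x i') + b1 j)

/-- `g²_{k,m}(t, x, a) = [c_kᵀ W²]⁺ [g¹_m(x,a)]⁺ - [-c_kᵀ W²]⁺ (g¹_m(x,a) ⊙ t) + c_kᵀ b²`. -/
def gTwo {M K r : ℕ} (W1 : Fin r → Fin M → ℝ) (W2 : Fin K → Fin r → ℝ)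
    (b1 : Fin r → ℝ) (b2 : Fin K → ℝ) (y k : Fin K) (t : Fin r → ℝ)
    (x : Fin M → ℝ) (a : ℝ) (m : Fin M) : ℝ :=
  (∑ j, max (∑ i, cVec y k i * W2 i j) 0 * max (gOne W1 b1 x a m j) 0)
    - (∑ j, max (-(∑ i, cVec y k i * W2 i j)) 0 * (gOne W1 b1 x a m j * t j))
    + ∑ i, cVec y k i * b2 i

open Finset Matrix

variable {ι κ : Type*} [Fintype ι] [Fintype κ]

theorem mem_convexHull_of_sum_abs_le [Nonempty ι] [DecidableEq ι] {ρ : ℝ} {δ : ι → ℝ}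
    (hδ : ∑ i, |δ i| ≤ ρ) :
    δ ∈ convexHull ℝ {v | ∃ m, v = Pi.single m ρ ∨ v = Pi.single m (-ρ)} := by
  have hρ : 0 ≤ ρ := (sum_nonneg fun i _ => abs_nonneg (δ i)).trans hδ
  rcases hρ.eq_or_lt with rfl | hρ
  · obtain rfl : δ = 0 := funext fun i => abs_eq_zero.mp <|
      le_antisymm ((single_le_sum (fun j _ => abs_nonneg (δ j)) (mem_univ i)).trans hδ)
        (abs_nonneg _)
    exact subset_convexHull ℝ _ ⟨Classical.arbitrary ι, Or.inl (Pi.single_zero _).symm⟩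
  -- the slack `ρ - ∑ |δ i|` is spread evenly over all vertices
  set c := (ρ - ∑ i, |δ i|) / (2 * Fintype.card ι)
  have hc : 0 ≤ c := div_nonneg (by linarith) (by positivity)
  let w : ι × Bool → ℝ := fun p => (max (if p.2 then δ p.1 else -δ p.1) 0 + c) / ρ
  let z : ι × Bool → ι → ℝ := fun p => Pi.single p.1 (if p.2 then ρ else -ρ)
  have hw : ∑ p, w p = 1 := by
    have hpair (i : ι) :
        (max (δ i) 0 + c) / ρ + (max (-δ i) 0 + c) / ρ = (|δ i| + 2 * c) / ρ := by
      rw [← max_zero_add_max_neg_zero_eq_abs_self]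
      ring
    simp only [w, Fintype.sum_prod_type, Fintype.sum_bool, if_true, Bool.false_eq_true, if_false,
      hpair]
    rw [← sum_div, sum_add_distrib, sum_const, card_univ, nsmul_eq_mul, div_eq_one_iff_eq hρ.ne']
    simp only [c]
    field_simp
    ring
  have hwz : ∑ p, w p • z p = δ := by
    ext i
    simp only [Finset.sum_apply, Pi.smul_apply, Pi.single_apply, smul_eq_mul, mul_ite, mul_neg,
      mul_zero, Fintype.sum_prod_type, Fintype.sum_bool, if_true, Bool.false_eq_true, if_false,
      sum_add_distrib, sum_ite_eq, mem_univ, w, z]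
    rw [div_mul_cancel₀ _ hρ.ne', div_mul_cancel₀ _ hρ.ne']
    linarith [max_zero_sub_max_neg_zero_eq_self (δ i)]
  rw [← hwz]
  refine (convex_convexHull ℝ _).sum_mem
    (fun p _ => div_nonneg (add_nonneg (le_max_right _ _) hc) hρ.le) hw fun p _ => ?_
  rcases p with ⟨m, _ | _⟩
  · exact subset_convexHull ℝ _ ⟨m, Or.inr rfl⟩
  · exact subset_convexHull ℝ _ ⟨m, Or.inl rfl⟩

/-- With `u = c_kᵀ W²`, `gTwo … t x a m` is this bound with `p = [u]⁺`, `q = [-u]⁺`, `C = c_kᵀ b²`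
at the pre-activation `gOne … a m`. -/
def reluRelaxation (p q t : κ → ℝ) (C : ℝ) (v : κ → ℝ) : ℝ :=
  (∑ j, p j * max (v j) 0) - (∑ j, q j * (v j * t j)) + C

theorem convexOn_reluRelaxation {p : κ → ℝ} (hp : 0 ≤ p) (q t : κ → ℝ) (C : ℝ) :
    ConvexOn ℝ Set.univ (reluRelaxation p q t C) := by
  refine ⟨convex_univ, fun v _ w _ a b ha hb hab => ?_⟩
  have hrelu : ConvexOn ℝ Set.univ fun s : ℝ => max s 0 :=
    (convexOn_id convex_univ).sup (convexOn_const 0 convex_univ)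
  have hsum : ∑ j, p j * max (a * v j + b * w j) 0
      ≤ a * ∑ j, p j * max (v j) 0 + b * ∑ j, p j * max (w j) 0 := by
    rw [mul_sum, mul_sum, ← sum_add_distrib]
    refine sum_le_sum fun j _ => ?_
    have hj : max (a * v j + b * w j) 0 ≤ a * max (v j) 0 + b * max (w j) 0 :=
      hrelu.2 trivial trivial ha hb hab
    linear_combination mul_le_mul_of_nonneg_left hj (hp j)
  have hlin : ∑ j, q j * ((a * v j + b * w j) * t j)
      = a * ∑ j, q j * (v j * t j) + b * ∑ j, q j * (w j * t j) := by
    rw [mul_sum, mul_sum, ← sum_add_distrib]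
    exact sum_congr rfl fun j _ => by ring
  simp only [reluRelaxation, Pi.add_apply, Pi.smul_apply, smul_eq_mul, hlin]
  linear_combination hsum - C * hab

theorem mul_max_zero_le (u v : ℝ) {τ : ℝ} (hτ₀ : 0 ≤ τ) (hτ₁ : τ ≤ 1) :
    u * max v 0 ≤ max u 0 * max v 0 - max (-u) 0 * (v * τ) := by
  have hvτ : v * τ ≤ max v 0 := by
    rcases le_total 0 v with hv | hv
    · exact (mul_le_of_le_one_right hv hτ₁).trans (le_max_left _ _)
    · exact (mul_nonpos_of_nonpos_of_nonneg hv hτ₀).trans (le_max_right _ _)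
  conv_lhs => rw [← max_zero_sub_max_neg_zero_eq_self u]
  linarith [mul_le_mul_of_nonneg_left hvτ (le_max_right (-u) 0)]

theorem dotProduct_relu_le_reluRelaxation (u v : κ → ℝ) {t : κ → ℝ} (ht : t ∈ Set.Icc 0 1)
    (C : ℝ) : u ⬝ᵥ (fun j => max (v j) 0) + C
      ≤ reluRelaxation (fun j => max (u j) 0) (fun j => max (-u j) 0) t C v := by
  rw [reluRelaxation, dotProduct, ← sum_sub_distrib]
  gcongr with j
  exact mul_max_zero_le (u j) (v j) (ht.1 j) (ht.2 j)

theorem exists_relu_le_max_reluRelaxation_single [Nonempty ι] [DecidableEq ι]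
    (A : Matrix κ ι ℝ) (b u : κ → ℝ) (C : ℝ) {t : κ → ℝ} (ht : t ∈ Set.Icc 0 1) (x : ι → ℝ)
    {ρ : ℝ} {δ : ι → ℝ} (hδ : ∑ i, |δ i| ≤ ρ) :
    ∃ m, u ⬝ᵥ (fun j => max ((A *ᵥ (x + δ) + b) j) 0) + C ≤
      max (reluRelaxation (fun j => max (u j) 0) (fun j => max (-u j) 0) t C
          (A *ᵥ (x + Pi.single m ρ) + b))
        (reluRelaxation (fun j => max (u j) 0) (fun j => max (-u j) 0) t C
          (A *ᵥ (x + Pi.single m (-ρ)) + b)) := by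
  let pre : (ι → ℝ) →ᵃ[ℝ] κ → ℝ := A.mulVecLin.toAffineMap + AffineMap.const ℝ _ (A *ᵥ x + b)
  have hpre (d : ι → ℝ) : pre d = A *ᵥ (x + d) + b := by
    simp only [pre, AffineMap.coe_add, AffineMap.coe_const, LinearMap.coe_toAffineMap,
      Pi.add_apply, Function.const_apply, mulVecLin_apply, mulVec_add]
    abel
  obtain ⟨v, ⟨m, hv⟩, hδv⟩ :=
    ((convexOn_reluRelaxation (fun j => le_max_right _ _) _ t C).comp_affineMap pre
      |>.exists_ge_of_mem_convexHull (Set.subset_univ _) (mem_convexHull_of_sum_abs_le hδ))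
  simp only [Function.comp_apply, hpre] at hδv
  refine ⟨m, (dotProduct_relu_le_reluRelaxation u _ ht C).trans (hδv.trans ?_)⟩
  rcases hv with rfl | rfl
  · exact le_max_left _ _
  · exact le_max_right _ _

theorem statement7_general (M K r : ℕ) (hM : 0 < M)
    (W1 : Fin r → Fin M → ℝ) (W2 : Fin K → Fin r → ℝ)
    (b1 : Fin r → ℝ) (b2 : Fin K → ℝ) (y k : Fin K)
    (ρ : ℝ) (x : Fin M → ℝ) :
    (⨆ δ ∈ {δ : Fin M → ℝ | ∑ i, |δ i| ≤ ρ},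
        ((∑ i, cVec y k i *
            ((∑ j, W2 i j * max ((∑ i', W1 j i' * (x + δ) i') + b1 j) 0) + b2 i) : ℝ) : EReal)) ≤
      ⨅ t ∈ Set.Icc (0 : Fin r → ℝ) 1, ⨆ m : Fin M,
        ((max (gTwo W1 W2 b1 b2 y k t x ρ m) (gTwo W1 W2 b1 b2 y k t x (-ρ) m) : ℝ) : EReal) := by
  have : Nonempty (Fin M) := ⟨⟨0, hM⟩⟩
  refine iSup₂_le fun δ hδ => le_iInf₂ fun t ht => ?_
  obtain ⟨m, hm⟩ := exists_relu_le_max_reluRelaxation_single (of W1) b1 (cVec y k ᵥ* of W2)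
    (cVec y k ⬝ᵥ b2) ht x hδ
  have hvertex (a : ℝ) : of W1 *ᵥ (x + Pi.single m a) + b1 = gOne W1 b1 x a m := by
    ext j
    simp only [gOne, mulVec_add, mulVec_single, mulVec, dotProduct, of_apply, Pi.add_apply,
      Pi.smul_apply, col_apply, smul_eq_mul, op_smul_eq_smul]
    ring
  rw [hvertex, hvertex, ← dotProduct_mulVec, ← dotProduct_add] at hm
  exact le_iSup_of_le m (EReal.coe_le_coe_iff.mpr hm)

/-- Theorem 3 (two-layer case): the `L₁`-robust objective is upper bounded by
`inf_{t ∈ [0,1]^r} max_{m} max{g²_{k,m}(t, x, ρ), g²_{k,m}(t, x, -ρ)}`. -/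
theorem statement7 (M K r : ℕ) (hM : 0 < M)
    (W1 : Fin r → Fin M → ℝ) (W2 : Fin K → Fin r → ℝ)
    (b1 : Fin r → ℝ) (b2 : Fin K → ℝ) (y k : Fin K)
    (ρ : ℝ) (hρ : 0 ≤ ρ) (x : Fin M → ℝ) :
    (⨆ δ ∈ {δ : Fin M → ℝ | ∑ i, |δ i| ≤ ρ},
        ((∑ i, cVec y k i *
            ((∑ j, W2 i j * max ((∑ i', W1 j i' * (x + δ) i') + b1 j) 0) + b2 i) : ℝ) : EReal)) ≤
      ⨅ t ∈ Set.Icc (0 : Fin r → ℝ) 1, ⨆ m : Fin M,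
        ((max (gTwo W1 W2 b1 b2 y k t x ρ m) (gTwo W1 W2 b1 b2 y k t x (-ρ) m) : ℝ) : EReal) :=
  statement7_general M K r hM W1 W2 b1 b2 y k ρ x
end

section
/- Fix t = (t_2, …, t_L) with each t_ℓ ∈ [0,1]^{r_{ℓ−1}}, fix x ∈ ℝ^M, a ∈ ℝ, m ∈ {1,…,M}, and fix s_{ℓ+1}, …, s_L (each s_j ∈ [0,1]^{r_{j−1}}). Then for every ℓ with 2 ≤ ℓ ≤ L−1: sup_{s_ℓ ∈ [0,1]^{r_{ℓ−1}}} ( p_ℓ(s,t)ᵀ g^{ℓ−1}_m(x, t, a, 1) + q_ℓ(s,t)ᵀ g^{ℓ−1}_m(x, t, a, −1) ) = p_{ℓ+1}(s,t)ᵀ g^ℓ_m(x, t, a, 1) + q_{ℓ+1}(s,t)ᵀ g^ℓ_m(x, t, a, −1) − ( p_{ℓ+1}(s,t) − q_{ℓ+1}(s,t) )ᵀ b^ℓ. -/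
/-- `c_k := e_k - e_y` as a vector on `ℕ` (only the first `K` coordinates are used). -/
def cVecN (y k : ℕ) : ℕ → ℝ :=
  fun i => (if i = k then 1 else 0) - (if i = y then 1 else 0)

/-- The `L`-layer ReLU network: `netZ r W b ℓ x = z^ℓ(x)`, where `z¹(x) = W¹ x + b¹` and
`z^ℓ(x) = W^ℓ [z^{ℓ-1}(x)]⁺ + b^ℓ`.  Vectors in `ℝ^{r_ℓ}` are modelled as functions `ℕ → ℝ`
whose first `r ℓ` coordinates are meaningful; `W ℓ : ℝ^{r_ℓ × r_{ℓ-1}}` as `ℕ → ℕ → ℝ`. -/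
noncomputable def netZ (r : ℕ → ℕ) (W : ℕ → ℕ → ℕ → ℝ) (b : ℕ → ℕ → ℝ) :
    ℕ → (ℕ → ℝ) → ℕ → ℝ
  | 0 => fun x => x
  | 1 => fun x i => (∑ j ∈ Finset.range (r 0), W 1 i j * x j) + b 1 i
  | (ℓ + 2) => fun x i =>
      (∑ j ∈ Finset.range (r (ℓ + 1)),
          W (ℓ + 2) i j * max (netZ r W b (ℓ + 1) x j) 0) + b (ℓ + 2) i

/-- The dual variables `(p_ℓ, q_ℓ)` of the robust reformulation, indexed by depth `d` from the
top layer, so `dualPQ r W L c s t d = (p_{L-d}, q_{L-d})`: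
`p_L = [(W^L)ᵀ c]⁺ ⊙ s_L`, `q_L = [-(W^L)ᵀ c]⁺ ⊙ t_L`, and for `ℓ = L - d - 1`,
`p_ℓ = (([W^ℓ]⁺)ᵀ p_{ℓ+1} + ([-W^ℓ]⁺)ᵀ q_{ℓ+1}) ⊙ s_ℓ`,
`q_ℓ = (([-W^ℓ]⁺)ᵀ p_{ℓ+1} + ([W^ℓ]⁺)ᵀ q_{ℓ+1}) ⊙ t_ℓ`. -/
noncomputable def dualPQ (r : ℕ → ℕ) (W : ℕ → ℕ → ℕ → ℝ) (L : ℕ) (c : ℕ → ℝ)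
    (s t : ℕ → ℕ → ℝ) : ℕ → (ℕ → ℝ) × (ℕ → ℝ)
  | 0 =>
      (fun j => max (∑ i ∈ Finset.range (r L), W L i j * c i) 0 * s L j,
       fun j => max (-(∑ i ∈ Finset.range (r L), W L i j * c i)) 0 * t L j)
  | (d + 1) =>
      let pq := dualPQ r W L c s t d
      (fun j =>
          ((∑ i ∈ Finset.range (r (L - d - 1)), max (W (L - d - 1) i j) 0 * pq.1 i)
            + ∑ i ∈ Finset.range (r (L - d - 1)), max (-(W (L - d - 1) i j)) 0 * pq.2 i)
            * s (L - d - 1) j,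
       fun j =>
          ((∑ i ∈ Finset.range (r (L - d - 1)), max (-(W (L - d - 1) i j)) 0 * pq.1 i)
            + ∑ i ∈ Finset.range (r (L - d - 1)), max (W (L - d - 1) i j) 0 * pq.2 i)
            * t (L - d - 1) j)

/-- Nested alternating `sup`/`inf` over the levels in the given list: for each level `ℓ` in
order, take `sup` over `s_ℓ ∈ [0,1]^∞` then `inf` over `t_ℓ ∈ [0,1]^∞`, finally evaluating
`F` at the updated families `s, t`. -/
noncomputable def nestSupInf (F : (ℕ → ℕ → ℝ) → (ℕ → ℕ → ℝ) → EReal) :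
    List ℕ → (ℕ → ℕ → ℝ) → (ℕ → ℕ → ℝ) → EReal
  | [], s, t => F s t
  | ℓ :: rest, s, t =>
      ⨆ sl ∈ Set.Icc (0 : ℕ → ℝ) 1, ⨅ tl ∈ Set.Icc (0 : ℕ → ℝ) 1,
        nestSupInf F rest (Function.update s ℓ sl) (Function.update t ℓ tl)

/-- The auxiliary network `g^ℓ_m(x, t, a, rs)`:
`g¹_m = rs (a W¹ e_m + W¹ x + b¹)`, and for `1 < ℓ`,
`g^ℓ_m(·, rs) = [rs W^ℓ]⁺ [g^{ℓ-1}_m(·, 1)]⁺ + [-rs W^ℓ]⁺ (g^{ℓ-1}_m(·, -1) ⊙ t_ℓ) + rs b^ℓ`. -/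
noncomputable def gAux (r : ℕ → ℕ) (W : ℕ → ℕ → ℕ → ℝ) (b : ℕ → ℕ → ℝ)
    (x : ℕ → ℝ) (t : ℕ → ℕ → ℝ) (a : ℝ) (m : ℕ) : ℕ → ℝ → ℕ → ℝ
  | 0 => fun _ _ => 0
  | 1 => fun rs i => rs * (a * W 1 i m + ((∑ j ∈ Finset.range (r 0), W 1 i j * x j) + b 1 i))
  | (ℓ + 2) => fun rs i =>
      (∑ j ∈ Finset.range (r (ℓ + 1)),
          max (rs * W (ℓ + 2) i j) 0 * max (gAux r W b x t a m (ℓ + 1) 1 j) 0)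
        + (∑ j ∈ Finset.range (r (ℓ + 1)),
          max (-(rs * W (ℓ + 2) i j)) 0 * (gAux r W b x t a m (ℓ + 1) (-1) j * t (ℓ + 2) j))
        + rs * b (ℓ + 2) i

/-!
Only `p_ℓ` depends on `s_ℓ`, and linearly: the objective is `∑ⱼ cⱼ s_ℓⱼ g^{ℓ-1}ⱼ(1) + const` with
`cⱼ = (([W^ℓ]⁺)ᵀ p_{ℓ+1} + ([-W^ℓ]⁺)ᵀ q_{ℓ+1})ⱼ ≥ 0`, because the dual variables of the layers above
are nonnegative. Hence the supremum over the box is attained at the indicator of `g^{ℓ-1}(1) ≥ 0`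
and turns `g^{ℓ-1}(1)` into `[g^{ℓ-1}(1)]⁺`. Moving the transposes `([±W^ℓ]⁺)ᵀ` across the
inner products then reassembles `g^ℓ(±1)`, except for the bias terms `±b^ℓ`, which are subtracted.
-/

open Finset

lemma dualPQ_update_of_lt (r : ℕ → ℕ) (W : ℕ → ℕ → ℕ → ℝ) (L : ℕ) (c : ℕ → ℝ)
    (s t : ℕ → ℕ → ℝ) (ℓ : ℕ) (σ : ℕ → ℝ) :
    ∀ d, ℓ + d < L → dualPQ r W L c (Function.update s ℓ σ) t d = dualPQ r W L c s t d
  | 0, h => by simp [dualPQ, Function.update_of_ne (show L ≠ ℓ by omega)]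
  | d + 1, h => by
      simp only [dualPQ, dualPQ_update_of_lt r W L c s t ℓ σ d (by omega),
        Function.update_of_ne (show L - d - 1 ≠ ℓ by omega)]

lemma dualPQ_nonneg (r : ℕ → ℕ) (W : ℕ → ℕ → ℕ → ℝ) (L : ℕ) (c : ℕ → ℝ)
    (s t : ℕ → ℕ → ℝ) :
    ∀ d, (∀ j, L - d ≤ j → j ≤ L → 0 ≤ s j) → (∀ j, L - d ≤ j → j ≤ L → 0 ≤ t j) →
      0 ≤ (dualPQ r W L c s t d).1 ∧ 0 ≤ (dualPQ r W L c s t d).2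
  | 0, hs, ht => ⟨fun j => mul_nonneg (le_max_right _ _) (hs L (by omega) le_rfl j),
      fun j => mul_nonneg (le_max_right _ _) (ht L (by omega) le_rfl j)⟩
  | d + 1, hs, ht => by
      obtain ⟨hp, hq⟩ := dualPQ_nonneg r W L c s t d
        (fun j hj => hs j (by omega)) (fun j hj => ht j (by omega))
      have hcomb : ∀ (A B : ℕ → ℕ → ℝ) j, 0 ≤
          ∑ i ∈ range (r (L - d - 1)), max (A i j) 0 * (dualPQ r W L c s t d).1 i
            + ∑ i ∈ range (r (L - d - 1)), max (B i j) 0 * (dualPQ r W L c s t d).2 i :=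
        fun A B j => add_nonneg
          (sum_nonneg fun i _ => mul_nonneg (le_max_right _ _) (hp i))
          (sum_nonneg fun i _ => mul_nonneg (le_max_right _ _) (hq i))
      exact ⟨fun j => mul_nonneg (hcomb (W _) (-W _) j) (hs (L - d - 1) (by omega) (by omega) j),
        fun j => mul_nonneg (hcomb (-W _) (W _) j) (ht (L - d - 1) (by omega) (by omega) j)⟩

lemma iSup_Icc_sum_mul_add {ι : Type*} (u : Finset ι) (c g : ι → ℝ) (hc : 0 ≤ c) (K : ℝ) :
    (⨆ σ ∈ Set.Icc (0 : ι → ℝ) 1, ((∑ j ∈ u, c j * σ j * g j + K : ℝ) : EReal)) =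
      ((∑ j ∈ u, c j * max (g j) 0 + K : ℝ) : EReal) := by
  refine le_antisymm (iSup₂_le fun σ hσ => ?_) ?_
  · refine EReal.coe_le_coe_iff.2 (add_le_add_left (sum_le_sum fun j _ => ?_) K)
    rw [mul_assoc]
    refine mul_le_mul_of_nonneg_left ?_ (hc j)
    rcases le_total 0 (g j) with hg | hg
    · exact (mul_le_of_le_one_left hg (hσ.2 j)).trans (le_max_left _ _)
    · exact (mul_nonpos_of_nonneg_of_nonpos (hσ.1 j) hg).trans (le_max_right _ _)
  · let σ : ι → ℝ := fun j => if 0 ≤ g j then 1 else 0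
    have hσ : σ ∈ Set.Icc (0 : ι → ℝ) 1 :=
      ⟨fun j => by unfold σ; split <;> norm_num, fun j => by unfold σ; split <;> norm_num⟩
    refine le_trans (le_of_eq ?_) (le_iSup₂ (f := fun σ (_ : σ ∈ Set.Icc (0 : ι → ℝ) 1) =>
      ((∑ j ∈ u, c j * σ j * g j + K : ℝ) : EReal)) σ hσ)
    refine EReal.coe_eq_coe_iff.2 (congrArg (· + K) (sum_congr rfl fun j _ => ?_))
    unfold σ
    split_ifs with hg
    · simp [max_eq_left hg]
    · simp [max_eq_right (not_le.1 hg).le]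

lemma sum_sum_mul_eq_sum_mul_sum {ι κ : Type*} (u : Finset ι) (v : Finset κ)
    (A : κ → ι → ℝ) (p : κ → ℝ) (w : ι → ℝ) :
    ∑ j ∈ u, (∑ i ∈ v, A i j * p i) * w j = ∑ i ∈ v, p i * ∑ j ∈ u, A i j * w j := by
  simp only [sum_mul, mul_sum]
  rw [sum_comm]
  exact sum_congr rfl fun i _ => sum_congr rfl fun j _ => by ring

lemma iSup_Icc_dual_layer {ι κ : Type*} (u : Finset ι) (v : Finset κ) (p q : κ → ℝ)
    (hp : 0 ≤ p) (hq : 0 ≤ q) (A : κ → ι → ℝ) (gp gn τ : ι → ℝ) (β : κ → ℝ) :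
    (⨆ σ ∈ Set.Icc (0 : ι → ℝ) 1,
      ((∑ j ∈ u, (∑ i ∈ v, max (A i j) 0 * p i + ∑ i ∈ v, max (-A i j) 0 * q i) * σ j * gp j
        + ∑ j ∈ u, (∑ i ∈ v, max (-A i j) 0 * p i + ∑ i ∈ v, max (A i j) 0 * q i) * τ j * gn j
        : ℝ) : EReal)) =
      ((∑ i ∈ v, p i * (∑ j ∈ u, max (A i j) 0 * max (gp j) 0
            + ∑ j ∈ u, max (-A i j) 0 * (gn j * τ j) + β i)
        + ∑ i ∈ v, q i * (∑ j ∈ u, max (-A i j) 0 * max (gp j) 0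
            + ∑ j ∈ u, max (A i j) 0 * (gn j * τ j) + -β i)
        - ∑ i ∈ v, (p i - q i) * β i : ℝ) : EReal) := by
  have hc : 0 ≤ fun j => ∑ i ∈ v, max (A i j) 0 * p i + ∑ i ∈ v, max (-A i j) 0 * q i :=
    fun j => add_nonneg (sum_nonneg fun i _ => mul_nonneg (le_max_right _ _) (hp i))
      (sum_nonneg fun i _ => mul_nonneg (le_max_right _ _) (hq i))
  refine (iSup_Icc_sum_mul_add u _ gp hc _).trans (EReal.coe_eq_coe_iff.2 ?_)
  simp only [mul_comm (gn _) (τ _), mul_assoc _ (τ _) (gn _), add_mul, mul_add, sub_mul,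
    mul_neg, sum_add_distrib, sum_sub_distrib, sum_neg_distrib, sum_sum_mul_eq_sum_mul_sum]
  ring

theorem statement10_general (r : ℕ → ℕ) (L : ℕ)
    (W : ℕ → ℕ → ℕ → ℝ) (b : ℕ → ℕ → ℝ)
    (y k : ℕ)
    (x : ℕ → ℝ) (a : ℝ) (m : ℕ)
    (s t : ℕ → ℕ → ℝ) (ℓ : ℕ) (hℓ2 : 2 ≤ ℓ) (hℓL : ℓ ≤ L - 1)
    (hs : ∀ j, ℓ + 1 ≤ j → j ≤ L → s j ∈ Set.Icc (0 : ℕ → ℝ) 1)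
    (ht : ∀ j, 2 ≤ j → j ≤ L → t j ∈ Set.Icc (0 : ℕ → ℝ) 1) :
    (⨆ sl ∈ Set.Icc (0 : ℕ → ℝ) 1,
        ((∑ j ∈ Finset.range (r (ℓ - 1)),
            (dualPQ r W L (cVecN y k) (Function.update s ℓ sl) t (L - ℓ)).1 j *
              gAux r W b x t a m (ℓ - 1) 1 j
          + ∑ j ∈ Finset.range (r (ℓ - 1)),
            (dualPQ r W L (cVecN y k) (Function.update s ℓ sl) t (L - ℓ)).2 j *
              gAux r W b x t a m (ℓ - 1) (-1) j : ℝ) : EReal)) =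
      ((∑ j ∈ Finset.range (r ℓ),
          (dualPQ r W L (cVecN y k) s t (L - ℓ - 1)).1 j * gAux r W b x t a m ℓ 1 j
        + ∑ j ∈ Finset.range (r ℓ),
          (dualPQ r W L (cVecN y k) s t (L - ℓ - 1)).2 j * gAux r W b x t a m ℓ (-1) j
        - ∑ j ∈ Finset.range (r ℓ),
          ((dualPQ r W L (cVecN y k) s t (L - ℓ - 1)).1 j
              - (dualPQ r W L (cVecN y k) s t (L - ℓ - 1)).2 j) * b ℓ j : ℝ) : EReal) := by
  obtain ⟨e, rfl⟩ : ∃ e, ℓ = e + 2 := ⟨ℓ - 2, by omega⟩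
  obtain ⟨d, rfl⟩ : ∃ d, L = e + d + 3 := ⟨L - e - 3, by omega⟩
  have hupd : ∀ σ, dualPQ r W (e + d + 3) (cVecN y k) (Function.update s (e + 2) σ) t d
      = dualPQ r W (e + d + 3) (cVecN y k) s t d :=
    fun σ => dualPQ_update_of_lt r W _ _ s t _ σ d (by omega)
  obtain ⟨hp, hq⟩ := dualPQ_nonneg r W (e + d + 3) (cVecN y k) s t d
    (fun j hj hjL => (hs j (by omega) hjL).1) (fun j hj hjL => (ht j (by omega) hjL).1)
  simp only [show e + d + 3 - (e + 2) = d + 1 by omega, show e + d + 3 - d - 1 = e + 2 by omega,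
    show e + 2 - 1 = e + 1 by omega, Nat.add_sub_cancel, dualPQ, hupd, Function.update_self,
    gAux, one_mul, neg_one_mul, neg_neg]
  exact iSup_Icc_dual_layer _ _ _ _ hp hq (W (e + 2)) _ _ _ (b (e + 2))

/-- Lemma 8: solving the supremum over `s_ℓ ∈ [0,1]^{r_{ℓ-1}}` of
`p_ℓ(s,t)ᵀ g^{ℓ-1}_m(x,t,a,1) + q_ℓ(s,t)ᵀ g^{ℓ-1}_m(x,t,a,-1)` yields
`p_{ℓ+1}(s,t)ᵀ g^ℓ_m(x,t,a,1) + q_{ℓ+1}(s,t)ᵀ g^ℓ_m(x,t,a,-1) - (p_{ℓ+1} - q_{ℓ+1})ᵀ b^ℓ`,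
for every `2 ≤ ℓ ≤ L - 1`.  Here `p_ℓ = (dualPQ … (L - ℓ)).1`, etc. -/
theorem statement10 (r : ℕ → ℕ) (L : ℕ) (hL : 2 ≤ L)
    (W : ℕ → ℕ → ℕ → ℝ) (b : ℕ → ℕ → ℝ)
    (y k : ℕ) (hy : y < r L) (hk : k < r L)
    (x : ℕ → ℝ) (a : ℝ) (m : ℕ) (hm : m < r 0)
    (s t : ℕ → ℕ → ℝ) (ℓ : ℕ) (hℓ2 : 2 ≤ ℓ) (hℓL : ℓ ≤ L - 1)
    (hs : ∀ j, ℓ + 1 ≤ j → j ≤ L → s j ∈ Set.Icc (0 : ℕ → ℝ) 1)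
    (ht : ∀ j, 2 ≤ j → j ≤ L → t j ∈ Set.Icc (0 : ℕ → ℝ) 1) :
    (⨆ sl ∈ Set.Icc (0 : ℕ → ℝ) 1,
        ((∑ j ∈ Finset.range (r (ℓ - 1)),
            (dualPQ r W L (cVecN y k) (Function.update s ℓ sl) t (L - ℓ)).1 j *
              gAux r W b x t a m (ℓ - 1) 1 j
          + ∑ j ∈ Finset.range (r (ℓ - 1)),
            (dualPQ r W L (cVecN y k) (Function.update s ℓ sl) t (L - ℓ)).2 j *
              gAux r W b x t a m (ℓ - 1) (-1) j : ℝ) : EReal)) =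
      ((∑ j ∈ Finset.range (r ℓ),
          (dualPQ r W L (cVecN y k) s t (L - ℓ - 1)).1 j * gAux r W b x t a m ℓ 1 j
        + ∑ j ∈ Finset.range (r ℓ),
          (dualPQ r W L (cVecN y k) s t (L - ℓ - 1)).2 j * gAux r W b x t a m ℓ (-1) j
        - ∑ j ∈ Finset.range (r ℓ),
          ((dualPQ r W L (cVecN y k) s t (L - ℓ - 1)).1 j
              - (dualPQ r W L (cVecN y k) s t (L - ℓ - 1)).2 j) * b ℓ j : ℝ) : EReal) :=
  statement10_general r L W b y k x a m s t ℓ hℓ2 hℓL hs ht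
end

section
/- Let ρ ≥ 0 and x ∈ ℝ^M. Then sup_{δ : ‖δ‖₁ ≤ ρ} c_kᵀ z^L(x + δ) ≤ inf_{t} max_{m ∈ {1,…,M}} max{ g^L_{k,m}(x, t, ρ), g^L_{k,m}(x, t, −ρ) }, where the infimum is over all t = (t_2, …, t_L) with each t_ℓ ∈ [0,1]^{r_{ℓ−1}}, and g^L_{k,m}(x, t, a) = [c_kᵀ W^L]⁺ [g^{L−1}_m(x, t, a, 1)]⁺ + [−c_kᵀ W^L]⁺ ( g^{L−1}_m(x, t, a, −1) ⊙ t_L ) + c_kᵀ b^L. -/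
/-- The top layer of the auxiliary network:
`g^L_{k,m}(x, t, a) = [c_kᵀ W^L]⁺ [g^{L-1}_m(x,t,a,1)]⁺
  + [-c_kᵀ W^L]⁺ (g^{L-1}_m(x,t,a,-1) ⊙ t_L) + c_kᵀ b^L`. -/
noncomputable def gTop (r : ℕ → ℕ) (W : ℕ → ℕ → ℕ → ℝ) (b : ℕ → ℕ → ℝ) (L : ℕ)
    (y k : ℕ) (x : ℕ → ℝ) (t : ℕ → ℕ → ℝ) (a : ℝ) (m : ℕ) : ℝ :=
  (∑ j ∈ Finset.range (r (L - 1)),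
      max (∑ i ∈ Finset.range (r L), cVecN y k i * W L i j) 0
        * max (gAux r W b x t a m (L - 1) 1 j) 0)
    + (∑ j ∈ Finset.range (r (L - 1)),
      max (-(∑ i ∈ Finset.range (r L), cVecN y k i * W L i j)) 0
        * (gAux r W b x t a m (L - 1) (-1) j * t L j))
    + ∑ i ∈ Finset.range (r L), cVecN y k i * b L i
section Aux
variable {rr : ℕ → ℕ} {W : ℕ → ℕ → ℕ → ℝ} {bb : ℕ → ℕ → ℝ}

lemma sl1 {z g tt : ℝ} (hz : -z ≤ g) (h0 : 0 ≤ tt) (h1 : tt ≤ 1) : -(max z 0) ≤ g * tt := by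
  rcases le_or_gt 0 g with h | h
  · have := mul_nonneg h h0
    have := le_max_right z 0
    linarith
  · have h2 : 0 ≤ (-g) * (1 - tt) := mul_nonneg (by linarith) (by linarith)
    nlinarith [le_max_left z 0]

lemma hwid (w : ℝ) : w = max w 0 - max (-w) 0 := by
  rcases le_total 0 w with h | h
  · simp [max_eq_left h, max_eq_right (neg_nonpos.2 h)]
  · simp [max_eq_right h, max_eq_left (neg_nonneg.2 h)]

lemma key {w z g1 g2 tt : ℝ} (h1 : z ≤ g1) (h2 : -z ≤ g2) (ht0 : 0 ≤ tt) (ht1 : tt ≤ 1) :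
    w * max z 0 ≤ max w 0 * max g1 0 + max (-w) 0 * (g2 * tt) := by
  have A : max z 0 ≤ max g1 0 := max_le_max h1 le_rfl
  have B : -(max z 0) ≤ g2 * tt := sl1 h2 ht0 ht1
  have p1 : max w 0 * max z 0 ≤ max w 0 * max g1 0 :=
    mul_le_mul_of_nonneg_left A (le_max_right w 0)
  have p2 : max (-w) 0 * (-(max z 0)) ≤ max (-w) 0 * (g2 * tt) :=
    mul_le_mul_of_nonneg_left B (le_max_right (-w) 0)
  have e : w * max z 0 = max w 0 * max z 0 + max (-w) 0 * (-(max z 0)) := by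
    linear_combination (max z 0) * hwid w
  linarith [p1, p2]

lemma jmaxsum {ι : Type*} (s : Finset ι) (lam : ι → ℝ) (h0 : ∀ v ∈ s, 0 ≤ lam v) (a : ι → ℝ) :
    max (∑ v ∈ s, lam v * a v) 0 ≤ ∑ v ∈ s, lam v * max (a v) 0 :=
  max_le (Finset.sum_le_sum fun v hv => mul_le_mul_of_nonneg_left (le_max_left _ _) (h0 v hv))
    (Finset.sum_nonneg fun v hv => mul_nonneg (h0 v hv) (le_max_right _ _))

/-- `Gnet` is `gAux` with a general perturbation `δ` in place of `a e_m`. -/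
noncomputable def Gnet (r : ℕ → ℕ) (W : ℕ → ℕ → ℕ → ℝ) (b : ℕ → ℕ → ℝ)
    (x : ℕ → ℝ) (t : ℕ → ℕ → ℝ) (δ : ℕ → ℝ) : ℕ → ℝ → ℕ → ℝ
  | 0 => fun _ _ => 0
  | 1 => fun rs i => rs * ((∑ j ∈ Finset.range (r 0), W 1 i j * (x j + δ j)) + b 1 i)
  | (ℓ + 2) => fun rs i =>
      (∑ j ∈ Finset.range (r (ℓ + 1)),
          max (rs * W (ℓ + 2) i j) 0 * max (Gnet r W b x t δ (ℓ + 1) 1 j) 0)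
        + (∑ j ∈ Finset.range (r (ℓ + 1)),
          max (-(rs * W (ℓ + 2) i j)) 0 * (Gnet r W b x t δ (ℓ + 1) (-1) j * t (ℓ + 2) j))
        + rs * b (ℓ + 2) i

lemma boundLem {x : ℕ → ℝ} {t : ℕ → ℕ → ℝ} {δ : ℕ → ℝ} {L : ℕ}
    (ht : ∀ ℓ, 2 ≤ ℓ → ℓ ≤ L → t ℓ ∈ Set.Icc (0 : ℕ → ℝ) 1) :
    ∀ ℓ, 1 ≤ ℓ → ℓ ≤ L → ∀ i,
      netZ rr W bb ℓ (x + δ) i ≤ Gnet rr W bb x t δ ℓ 1 i ∧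
      -(netZ rr W bb ℓ (x + δ) i) ≤ Gnet rr W bb x t δ ℓ (-1) i := by
  intro ℓ
  induction ℓ using Nat.strong_induction_on with
  | _ ℓ IH =>
    rcases ℓ with _ | _ | n
    · omega
    · intro _ _ i
      simp only [netZ, Gnet, Pi.add_apply]
      constructor
      · rw [one_mul]
      · rw [neg_mul, one_mul]
    · intro _ hℓL i
      have hIH := IH (n + 1) (by omega) (by omega) (by omega)
      obtain ⟨ht0, ht1⟩ := Set.mem_Icc.1 (ht (n + 2) (by omega) hℓL)
      have hterm : ∀ w : ℕ → ℝ, ∀ j ∈ Finset.range (rr (n + 1)),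
          w j * max (netZ rr W bb (n + 1) (x + δ) j) 0 ≤
            max (w j) 0 * max (Gnet rr W bb x t δ (n + 1) 1 j) 0
            + max (-(w j)) 0 * (Gnet rr W bb x t δ (n + 1) (-1) j * t (n + 2) j) :=
        fun w j _ => key (hIH j).1 (hIH j).2 (ht0 j) (ht1 j)
      constructor
      · simp only [netZ, Gnet, one_mul, neg_mul]
        have h1 := Finset.sum_le_sum (hterm (fun j => W (n + 2) i j))
        rw [Finset.sum_add_distrib] at h1
        simpa using by linarith
      · simp only [netZ, Gnet, one_mul, neg_mul, neg_neg]
        have h1 := Finset.sum_le_sum (hterm (fun j => -(W (n + 2) i j)))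
        rw [Finset.sum_add_distrib] at h1
        simp only [neg_neg] at h1
        have h2 : -((∑ j ∈ Finset.range (rr (n + 1)),
            W (n + 2) i j * max (netZ rr W bb (n + 1) (x + δ) j) 0) + bb (n + 2) i)
            = (∑ j ∈ Finset.range (rr (n + 1)),
              (-(W (n + 2) i j)) * max (netZ rr W bb (n + 1) (x + δ) j) 0) + -(bb (n + 2) i) := by
          rw [neg_add, ← Finset.sum_neg_distrib]
          simp [neg_mul]
        rw [h2]
        linarith

end Aux
section Aux2
variable {rr : ℕ → ℕ} {W : ℕ → ℕ → ℕ → ℝ} {bb : ℕ → ℕ → ℝ}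

lemma jensenLem {ι : Type*} {x : ℕ → ℝ} {t : ℕ → ℕ → ℝ} {δ : ℕ → ℝ} {L : ℕ}
    (ht : ∀ ℓ, 2 ≤ ℓ → ℓ ≤ L → t ℓ ∈ Set.Icc (0 : ℕ → ℝ) 1)
    (s : Finset ι) (lam : ι → ℝ) (hlam : ∀ v ∈ s, 0 ≤ lam v)
    (hsum : ∑ v ∈ s, lam v = 1) (δs : ι → ℕ → ℝ)
    (hδ : ∀ j ∈ Finset.range (rr 0), δ j = ∑ v ∈ s, lam v * δs v j) :
    ∀ ℓ, 1 ≤ ℓ → ℓ ≤ L → ∀ (rs : ℝ) (i : ℕ),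
      Gnet rr W bb x t δ ℓ rs i ≤ ∑ v ∈ s, lam v * Gnet rr W bb x t (δs v) ℓ rs i := by
  intro ℓ
  induction ℓ using Nat.strong_induction_on with
  | _ ℓ IH =>
    rcases ℓ with _ | _ | n
    · omega
    · intro _ _ rs i
      apply le_of_eq
      simp only [Gnet]
      have hj : ∀ j ∈ Finset.range (rr 0),
          W 1 i j * (x j + δ j) = ∑ v ∈ s, lam v * (W 1 i j * (x j + δs v j)) := by
        intro j hjm
        have e2 : ∀ v ∈ s, lam v * (W 1 i j * (x j + δs v j))
            = lam v * (W 1 i j * x j) + W 1 i j * (lam v * δs v j) := fun v _ => by ring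
        rw [Finset.sum_congr rfl e2, Finset.sum_add_distrib, ← Finset.sum_mul, hsum, one_mul,
          ← Finset.mul_sum, ← hδ j hjm]
        ring
      have inner : ∑ v ∈ s, lam v * ((∑ j ∈ Finset.range (rr 0), W 1 i j * (x j + δs v j)) + bb 1 i)
          = (∑ j ∈ Finset.range (rr 0), W 1 i j * (x j + δ j)) + bb 1 i := by
        have e3 : ∀ v ∈ s, lam v * ((∑ j ∈ Finset.range (rr 0), W 1 i j * (x j + δs v j)) + bb 1 i)
            = (∑ j ∈ Finset.range (rr 0), lam v * (W 1 i j * (x j + δs v j))) + lam v * bb 1 i := by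
          intro v _
          rw [mul_add, Finset.mul_sum]
        rw [Finset.sum_congr rfl e3, Finset.sum_add_distrib, ← Finset.sum_mul, hsum, one_mul,
          Finset.sum_comm]
        congr 1
        exact Finset.sum_congr rfl fun j hjm => (hj j hjm).symm
      symm
      calc ∑ v ∈ s, lam v * (rs * ((∑ j ∈ Finset.range (rr 0), W 1 i j * (x j + δs v j)) + bb 1 i))
          = rs * ∑ v ∈ s, lam v * ((∑ j ∈ Finset.range (rr 0), W 1 i j * (x j + δs v j)) + bb 1 i) := by
            rw [Finset.mul_sum]
            apply Finset.sum_congr rfl; intro v _; ring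
        _ = rs * ((∑ j ∈ Finset.range (rr 0), W 1 i j * (x j + δ j)) + bb 1 i) := by rw [inner]
    · intro _ hℓL rs i
      have hIH : ∀ (rs' : ℝ) (j : ℕ), Gnet rr W bb x t δ (n+1) rs' j ≤
          ∑ v ∈ s, lam v * Gnet rr W bb x t (δs v) (n+1) rs' j :=
        fun rs' j => IH (n+1) (by omega) (by omega) (by omega) rs' j
      obtain ⟨ht0, _⟩ := Set.mem_Icc.1 (ht (n + 2) (by omega) hℓL)
      simp only [Gnet]
      have T1 : ∀ j ∈ Finset.range (rr (n+1)),
          max (rs * W (n+2) i j) 0 * max (Gnet rr W bb x t δ (n+1) 1 j) 0 ≤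
          ∑ v ∈ s, lam v * (max (rs * W (n+2) i j) 0 * max (Gnet rr W bb x t (δs v) (n+1) 1 j) 0) := by
        intro j _
        have : max (Gnet rr W bb x t δ (n+1) 1 j) 0 ≤
            ∑ v ∈ s, lam v * max (Gnet rr W bb x t (δs v) (n+1) 1 j) 0 :=
          le_trans (max_le_max (hIH 1 j) le_rfl) (jmaxsum s lam hlam _)
        calc max (rs * W (n+2) i j) 0 * max (Gnet rr W bb x t δ (n+1) 1 j) 0
            ≤ max (rs * W (n+2) i j) 0 * (∑ v ∈ s, lam v * max (Gnet rr W bb x t (δs v) (n+1) 1 j) 0) :=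
              mul_le_mul_of_nonneg_left this (le_max_right _ _)
          _ = _ := by rw [Finset.mul_sum]; apply Finset.sum_congr rfl; intro v _; ring
      have T2 : ∀ j ∈ Finset.range (rr (n+1)),
          max (-(rs * W (n+2) i j)) 0 * (Gnet rr W bb x t δ (n+1) (-1) j * t (n+2) j) ≤
          ∑ v ∈ s, lam v * (max (-(rs * W (n+2) i j)) 0 * (Gnet rr W bb x t (δs v) (n+1) (-1) j * t (n+2) j)) := by
        intro j _
        have h1 : Gnet rr W bb x t δ (n+1) (-1) j * t (n+2) j ≤
            ∑ v ∈ s, lam v * (Gnet rr W bb x t (δs v) (n+1) (-1) j * t (n+2) j) := by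
          calc Gnet rr W bb x t δ (n+1) (-1) j * t (n+2) j
              ≤ (∑ v ∈ s, lam v * Gnet rr W bb x t (δs v) (n+1) (-1) j) * t (n+2) j :=
                mul_le_mul_of_nonneg_right (hIH (-1) j) (ht0 j)
            _ = _ := by rw [Finset.sum_mul]; apply Finset.sum_congr rfl; intro v _; ring
        calc max (-(rs * W (n+2) i j)) 0 * (Gnet rr W bb x t δ (n+1) (-1) j * t (n+2) j)
            ≤ max (-(rs * W (n+2) i j)) 0 * (∑ v ∈ s, lam v * (Gnet rr W bb x t (δs v) (n+1) (-1) j * t (n+2) j)) :=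
              mul_le_mul_of_nonneg_left h1 (le_max_right _ _)
          _ = _ := by rw [Finset.mul_sum]; apply Finset.sum_congr rfl; intro v _; ring
      have S1 := Finset.sum_le_sum T1
      have S2 := Finset.sum_le_sum T2
      rw [Finset.sum_comm] at S1 S2
      have hb : rs * bb (n+2) i = ∑ v ∈ s, lam v * (rs * bb (n+2) i) := by
        rw [← Finset.sum_mul, hsum, one_mul]
      calc (∑ j ∈ Finset.range (rr (n+1)), max (rs * W (n+2) i j) 0 * max (Gnet rr W bb x t δ (n+1) 1 j) 0)
            + (∑ j ∈ Finset.range (rr (n+1)), max (-(rs * W (n+2) i j)) 0 * (Gnet rr W bb x t δ (n+1) (-1) j * t (n+2) j))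
            + rs * bb (n+2) i
          ≤ (∑ v ∈ s, ∑ j ∈ Finset.range (rr (n+1)), lam v * (max (rs * W (n+2) i j) 0 * max (Gnet rr W bb x t (δs v) (n+1) 1 j) 0))
            + (∑ v ∈ s, ∑ j ∈ Finset.range (rr (n+1)), lam v * (max (-(rs * W (n+2) i j)) 0 * (Gnet rr W bb x t (δs v) (n+1) (-1) j * t (n+2) j)))
            + ∑ v ∈ s, lam v * (rs * bb (n+2) i) := by
            rw [← hb]; exact add_le_add (add_le_add S1 S2) le_rfl
        _ = _ := by
            rw [← Finset.sum_add_distrib, ← Finset.sum_add_distrib]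
            apply Finset.sum_congr rfl
            intro v _
            rw [← Finset.mul_sum, ← Finset.mul_sum]
            ring

end Aux2
section Aux3
variable {rr : ℕ → ℕ} {W : ℕ → ℕ → ℕ → ℝ} {bb : ℕ → ℕ → ℝ}

lemma gnetVertex {x : ℕ → ℝ} {t : ℕ → ℕ → ℝ} (a : ℝ) (m : ℕ) (hm : m < rr 0 ∨ a = 0) :
    ∀ (ℓ : ℕ) (rs : ℝ) (i : ℕ),
      Gnet rr W bb x t (fun j => a * (if j = m then 1 else 0)) ℓ rs i = gAux rr W bb x t a m ℓ rs i := by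
  intro ℓ
  induction ℓ using Nat.strong_induction_on with
  | _ ℓ IH =>
    rcases ℓ with _ | _ | n
    · intro rs i; simp [Gnet, gAux]
    · intro rs i
      simp only [Gnet, gAux]
      congr 1
      have e1 : ∀ j ∈ Finset.range (rr 0),
          W 1 i j * (x j + a * (if j = m then 1 else 0))
          = W 1 i j * x j + (if j = m then W 1 i j * a else 0) := by
        intro j _
        rcases eq_or_ne j m with h | h <;> simp [h] <;> ring
      rw [Finset.sum_congr rfl e1, Finset.sum_add_distrib, Finset.sum_ite_eq' (Finset.range (rr 0))]
      rcases hm with hm | hm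
      · rw [if_pos (Finset.mem_range.2 hm)]
        ring
      · subst hm
        simp
    · intro rs i
      simp only [Gnet, gAux]
      congr 1
      congr 1
      · apply Finset.sum_congr rfl
        intro j _
        rw [IH (n+1) (by omega)]
      · apply Finset.sum_congr rfl
        intro j _
        rw [IH (n+1) (by omega)]

/-- Top-layer expression with general perturbation. -/
noncomputable def GT (r : ℕ → ℕ) (W : ℕ → ℕ → ℕ → ℝ) (b : ℕ → ℕ → ℝ)
    (x : ℕ → ℝ) (t : ℕ → ℕ → ℝ) (c : ℕ → ℝ) (n : ℕ) (δ : ℕ → ℝ) : ℝ :=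
  (∑ j ∈ Finset.range (r (n + 1)),
      max (∑ i ∈ Finset.range (r (n + 2)), c i * W (n + 2) i j) 0
        * max (Gnet r W b x t δ (n + 1) 1 j) 0)
    + (∑ j ∈ Finset.range (r (n + 1)),
      max (-(∑ i ∈ Finset.range (r (n + 2)), c i * W (n + 2) i j)) 0
        * (Gnet r W b x t δ (n + 1) (-1) j * t (n + 2) j))
    + ∑ i ∈ Finset.range (r (n + 2)), c i * b (n + 2) i

lemma topBound {x : ℕ → ℝ} {t : ℕ → ℕ → ℝ} {δ : ℕ → ℝ} {n : ℕ} (c : ℕ → ℝ)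
    (ht : ∀ ℓ, 2 ≤ ℓ → ℓ ≤ n + 2 → t ℓ ∈ Set.Icc (0 : ℕ → ℝ) 1) :
    ∑ i ∈ Finset.range (rr (n + 2)), c i * netZ rr W bb (n + 2) (x + δ) i ≤
      GT rr W bb x t c n δ := by
  obtain ⟨ht0, ht1⟩ := Set.mem_Icc.1 (ht (n + 2) (by omega) le_rfl)
  have hb := boundLem (rr := rr) (W := W) (bb := bb) (x := x) (t := t) (δ := δ) (L := n + 2) ht (n + 1) (by omega) (by omega)
  have swap : ∑ i ∈ Finset.range (rr (n + 2)), c i * netZ rr W bb (n + 2) (x + δ) i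
      = (∑ j ∈ Finset.range (rr (n + 1)),
          (∑ i ∈ Finset.range (rr (n + 2)), c i * W (n + 2) i j)
            * max (netZ rr W bb (n + 1) (x + δ) j) 0)
        + ∑ i ∈ Finset.range (rr (n + 2)), c i * bb (n + 2) i := by
    simp only [netZ]
    have e1 : ∀ i ∈ Finset.range (rr (n + 2)),
        c i * ((∑ j ∈ Finset.range (rr (n + 1)),
            W (n + 2) i j * max (netZ rr W bb (n + 1) (x + δ) j) 0) + bb (n + 2) i)
        = (∑ j ∈ Finset.range (rr (n + 1)),
            c i * W (n + 2) i j * max (netZ rr W bb (n + 1) (x + δ) j) 0) + c i * bb (n + 2) i := by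
      intro i _
      rw [mul_add, Finset.mul_sum]
      congr 1
      apply Finset.sum_congr rfl
      intro j _
      ring
    rw [Finset.sum_congr rfl e1, Finset.sum_add_distrib, Finset.sum_comm]
    congr 1
    apply Finset.sum_congr rfl
    intro j _
    rw [Finset.sum_mul]
  rw [swap, GT]
  have hterm : ∀ j ∈ Finset.range (rr (n + 1)),
      (∑ i ∈ Finset.range (rr (n + 2)), c i * W (n + 2) i j)
          * max (netZ rr W bb (n + 1) (x + δ) j) 0 ≤
        max (∑ i ∈ Finset.range (rr (n + 2)), c i * W (n + 2) i j) 0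
            * max (Gnet rr W bb x t δ (n + 1) 1 j) 0
          + max (-(∑ i ∈ Finset.range (rr (n + 2)), c i * W (n + 2) i j)) 0
            * (Gnet rr W bb x t δ (n + 1) (-1) j * t (n + 2) j) :=
    fun j _ => key (hb j).1 (hb j).2 (ht0 j) (ht1 j)
  have h1 := Finset.sum_le_sum hterm
  rw [Finset.sum_add_distrib] at h1
  linarith

lemma topJensen {ι : Type*} {x : ℕ → ℝ} {t : ℕ → ℕ → ℝ} {δ : ℕ → ℝ} {n : ℕ} (c : ℕ → ℝ)
    (ht : ∀ ℓ, 2 ≤ ℓ → ℓ ≤ n + 2 → t ℓ ∈ Set.Icc (0 : ℕ → ℝ) 1)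
    (s : Finset ι) (lam : ι → ℝ) (hlam : ∀ v ∈ s, 0 ≤ lam v)
    (hsum : ∑ v ∈ s, lam v = 1) (δs : ι → ℕ → ℝ)
    (hδ : ∀ j ∈ Finset.range (rr 0), δ j = ∑ v ∈ s, lam v * δs v j) :
    GT rr W bb x t c n δ ≤ ∑ v ∈ s, lam v * GT rr W bb x t c n (δs v) := by
  have hIH : ∀ (rs : ℝ) (j : ℕ), Gnet rr W bb x t δ (n+1) rs j ≤
      ∑ v ∈ s, lam v * Gnet rr W bb x t (δs v) (n+1) rs j :=
    fun rs j => jensenLem ht s lam hlam hsum δs hδ (n+1) (by omega) (by omega) rs j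
  obtain ⟨ht0, _⟩ := Set.mem_Icc.1 (ht (n + 2) (by omega) le_rfl)
  simp only [GT]
  set cw : ℕ → ℝ := fun j => ∑ i ∈ Finset.range (rr (n + 2)), c i * W (n + 2) i j with hcw
  have T1 : ∀ j ∈ Finset.range (rr (n+1)),
      max (cw j) 0 * max (Gnet rr W bb x t δ (n+1) 1 j) 0 ≤
      ∑ v ∈ s, lam v * (max (cw j) 0 * max (Gnet rr W bb x t (δs v) (n+1) 1 j) 0) := by
    intro j _
    have h2 : max (Gnet rr W bb x t δ (n+1) 1 j) 0 ≤
        ∑ v ∈ s, lam v * max (Gnet rr W bb x t (δs v) (n+1) 1 j) 0 :=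
      le_trans (max_le_max (hIH 1 j) le_rfl) (jmaxsum s lam hlam _)
    calc max (cw j) 0 * max (Gnet rr W bb x t δ (n+1) 1 j) 0
        ≤ max (cw j) 0 * (∑ v ∈ s, lam v * max (Gnet rr W bb x t (δs v) (n+1) 1 j) 0) :=
          mul_le_mul_of_nonneg_left h2 (le_max_right _ _)
      _ = _ := by rw [Finset.mul_sum]; apply Finset.sum_congr rfl; intro v _; ring
  have T2 : ∀ j ∈ Finset.range (rr (n+1)),
      max (-(cw j)) 0 * (Gnet rr W bb x t δ (n+1) (-1) j * t (n+2) j) ≤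
      ∑ v ∈ s, lam v * (max (-(cw j)) 0 * (Gnet rr W bb x t (δs v) (n+1) (-1) j * t (n+2) j)) := by
    intro j _
    have h1 : Gnet rr W bb x t δ (n+1) (-1) j * t (n+2) j ≤
        ∑ v ∈ s, lam v * (Gnet rr W bb x t (δs v) (n+1) (-1) j * t (n+2) j) := by
      calc Gnet rr W bb x t δ (n+1) (-1) j * t (n+2) j
          ≤ (∑ v ∈ s, lam v * Gnet rr W bb x t (δs v) (n+1) (-1) j) * t (n+2) j :=
            mul_le_mul_of_nonneg_right (hIH (-1) j) (ht0 j)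
        _ = _ := by rw [Finset.sum_mul]; apply Finset.sum_congr rfl; intro v _; ring
    calc max (-(cw j)) 0 * (Gnet rr W bb x t δ (n+1) (-1) j * t (n+2) j)
        ≤ max (-(cw j)) 0 * (∑ v ∈ s, lam v * (Gnet rr W bb x t (δs v) (n+1) (-1) j * t (n+2) j)) :=
          mul_le_mul_of_nonneg_left h1 (le_max_right _ _)
      _ = _ := by rw [Finset.mul_sum]; apply Finset.sum_congr rfl; intro v _; ring
  have S1 := Finset.sum_le_sum T1
  have S2 := Finset.sum_le_sum T2
  rw [Finset.sum_comm] at S1 S2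
  have hb2 : ∑ i ∈ Finset.range (rr (n+2)), c i * bb (n+2) i
      = ∑ v ∈ s, lam v * (∑ i ∈ Finset.range (rr (n+2)), c i * bb (n+2) i) := by
    rw [← Finset.sum_mul, hsum, one_mul]
  calc (∑ j ∈ Finset.range (rr (n+1)), max (cw j) 0 * max (Gnet rr W bb x t δ (n+1) 1 j) 0)
        + (∑ j ∈ Finset.range (rr (n+1)), max (-(cw j)) 0 * (Gnet rr W bb x t δ (n+1) (-1) j * t (n+2) j))
        + ∑ i ∈ Finset.range (rr (n+2)), c i * bb (n+2) i
      ≤ (∑ v ∈ s, ∑ j ∈ Finset.range (rr (n+1)), lam v * (max (cw j) 0 * max (Gnet rr W bb x t (δs v) (n+1) 1 j) 0))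
        + (∑ v ∈ s, ∑ j ∈ Finset.range (rr (n+1)), lam v * (max (-(cw j)) 0 * (Gnet rr W bb x t (δs v) (n+1) (-1) j * t (n+2) j)))
        + ∑ v ∈ s, lam v * (∑ i ∈ Finset.range (rr (n+2)), c i * bb (n+2) i) := by
        rw [← hb2]; exact add_le_add (add_le_add S1 S2) le_rfl
    _ = _ := by
        rw [← Finset.sum_add_distrib, ← Finset.sum_add_distrib]
        apply Finset.sum_congr rfl
        intro v _
        rw [← Finset.mul_sum, ← Finset.mul_sum]
        ring

end Aux3
lemma maxabs (a : ℝ) : max a 0 + max (-a) 0 = |a| := by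
  rcases le_total 0 a with h | h
  · rw [max_eq_left h, max_eq_right (neg_nonpos.2 h), abs_of_nonneg h, add_zero]
  · rw [max_eq_right h, max_eq_left (neg_nonneg.2 h), abs_of_nonpos h, zero_add]

/-- Theorem 7 (generalization of Theorem 3): the `L₁`-robust objective for the `L`-layer
network is upper bounded by
`inf_t max_{m ∈ [M]} max{g^L_{k,m}(x, t, ρ), g^L_{k,m}(x, t, -ρ)}`, the infimum being over
families `t = (t_2, …, t_L)` with each `t_ℓ ∈ [0,1]^{r_{ℓ-1}}`. -/
theorem statement11 (r : ℕ → ℕ) (L : ℕ) (hL : 2 ≤ L)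
    (W : ℕ → ℕ → ℕ → ℝ) (b : ℕ → ℕ → ℝ)
    (y k : ℕ) (hy : y < r L) (hk : k < r L) (hM : 0 < r 0)
    (ρ : ℝ) (hρ : 0 ≤ ρ) (x : ℕ → ℝ) :
    (⨆ δ ∈ {δ : ℕ → ℝ |
        (∑ j ∈ Finset.range (r 0), |δ j|) ≤ ρ ∧ ∀ j, r 0 ≤ j → δ j = 0},
        ((∑ i ∈ Finset.range (r L), cVecN y k i * netZ r W b L (x + δ) i : ℝ) : EReal)) ≤
      ⨅ t ∈ {t : ℕ → ℕ → ℝ | ∀ ℓ, 2 ≤ ℓ → ℓ ≤ L → t ℓ ∈ Set.Icc (0 : ℕ → ℝ) 1},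
        ⨆ m ∈ Finset.range (r 0),
          ((max (gTop r W b L y k x t ρ m) (gTop r W b L y k x t (-ρ) m) : ℝ) : EReal) := by
  obtain ⟨n, rfl⟩ : ∃ n, L = n + 2 := ⟨L - 2, by omega⟩
  apply iSup₂_le
  intro δ hδ
  apply le_iInf₂
  intro t ht
  simp only [Set.mem_setOf_eq] at hδ ht
  obtain ⟨hδ1, hδ2⟩ := hδ
  set M := r 0 with hMdef
  have hne : (Finset.range M).Nonempty := ⟨0, Finset.mem_range.2 hM⟩
  set f : ℕ → ℝ := fun m =>
    max (gTop r W b (n + 2) y k x t ρ m) (gTop r W b (n + 2) y k x t (-ρ) m) with hf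
  set B : ℝ := (Finset.range M).sup' hne f with hB
  -- vertices and weights
  set slack : ℝ := 1 - (∑ j ∈ Finset.range M, |δ j|) / ρ with hslackdef
  have hslack : 0 ≤ slack := by
    rcases eq_or_lt_of_le hρ with h | h
    · simp [hslackdef, ← h]
    · have := (div_le_one h).2 hδ1
      simp only [hslackdef]
      linarith
  set lam : ℕ × Bool → ℝ := fun p =>
    (if p.2 then max (δ p.1) 0 else max (-δ p.1) 0) / ρ
      + (if p.1 = 0 then slack / 2 else 0) with hlamdef
  set vert : ℕ × Bool → ℕ → ℝ := fun p j =>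
    (if p.2 then ρ else -ρ) * (if j = p.1 then 1 else 0) with hvertdef
  set sF : Finset (ℕ × Bool) := Finset.range M ×ˢ Finset.univ with hsF
  have hlam : ∀ v ∈ sF, 0 ≤ lam v := by
    intro v _
    apply add_nonneg
    · apply div_nonneg _ hρ
      rcases v.2 <;> simp [le_max_right]
    · split
      · exact div_nonneg hslack (by norm_num)
      · exact le_rfl
  have lt : ∀ m, lam (m, true) = max (δ m) 0 / ρ + (if m = 0 then slack / 2 else 0) := by
    intro m; simp [hlamdef]
  have lf : ∀ m, lam (m, false) = max (-δ m) 0 / ρ + (if m = 0 then slack / 2 else 0) := by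
    intro m; simp [hlamdef]
  have vt : ∀ m j, vert (m, true) j = ρ * (if j = m then 1 else 0) := by
    intro m j; simp [hvertdef]
  have vf : ∀ m j, vert (m, false) j = -ρ * (if j = m then 1 else 0) := by
    intro m j; simp [hvertdef]
  have hsum : ∑ v ∈ sF, lam v = 1 := by
    rw [hsF, Finset.sum_product]
    have e1 : ∀ m ∈ Finset.range M, (∑ sg : Bool, lam (m, sg))
        = |δ m| / ρ + (if m = 0 then slack else 0) := by
      intro m _
      rw [Fintype.sum_bool, lt, lf, ← maxabs (δ m)]
      split <;> ring
    rw [Finset.sum_congr rfl e1, Finset.sum_add_distrib, ← Finset.sum_div,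
      Finset.sum_ite_eq' (Finset.range M) 0 (fun _ => slack), if_pos (Finset.mem_range.2 hM)]
    simp only [hslackdef]
    ring
  have hzero : ρ = 0 → ∀ j ∈ Finset.range M, δ j = 0 := by
    intro h j hj
    have hnn : ∀ j ∈ Finset.range M, (0:ℝ) ≤ |δ j| := fun _ _ => abs_nonneg _
    have := (Finset.sum_eq_zero_iff_of_nonneg hnn).1
      (le_antisymm (h ▸ hδ1) (Finset.sum_nonneg hnn)) j hj
    exact abs_eq_zero.1 this
  have hrep : ∀ j ∈ Finset.range M, δ j = ∑ v ∈ sF, lam v * vert v j := by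
    intro j hj
    rw [hsF, Finset.sum_product]
    have e1 : ∀ m ∈ Finset.range M, (∑ sg : Bool, lam (m, sg) * vert (m, sg) j)
        = if j = m then ρ * (lam (m, true) - lam (m, false)) else 0 := by
      intro m _
      rw [Fintype.sum_bool, vt, vf]
      rcases eq_or_ne j m with h | h
      · simp only [if_pos h]
        ring
      · simp only [if_neg h]
        ring
    rw [Finset.sum_congr rfl e1, Finset.sum_ite_eq (Finset.range M) j, if_pos hj]
    have e2 : lam (j, true) - lam (j, false) = δ j / ρ := by
      rw [lt, lf]
      linear_combination (-ρ⁻¹) * hwid (δ j)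
    rw [e2]
    rcases eq_or_lt_of_le hρ with h | h
    · rw [← h, div_zero, mul_zero]
      exact hzero h.symm j hj
    · rw [mul_comm, div_mul_cancel₀ _ (ne_of_gt h)]
  -- the chain of inequalities
  set c : ℕ → ℝ := cVecN y k with hc
  have step1 : ∑ i ∈ Finset.range (r (n + 2)), c i * netZ r W b (n + 2) (x + δ) i ≤
      GT r W b x t c n δ := topBound c ht
  have step2 : GT r W b x t c n δ ≤ ∑ v ∈ sF, lam v * GT r W b x t c n (vert v) :=
    topJensen c ht sF lam hlam hsum vert hrep
  have step3 : ∀ v ∈ sF, GT r W b x t c n (vert v) =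
      gTop r W b (n + 2) y k x t (if v.2 then ρ else -ρ) v.1 := by
    rintro ⟨m, sg⟩ hv
    have hm : m < M := by
      simp only [hsF, Finset.mem_product] at hv
      exact Finset.mem_range.1 hv.1
    have hg := gnetVertex (rr := r) (W := W) (bb := b) (x := x) (t := t)
      (if sg then ρ else -ρ) m (Or.inl hm)
    have hv1 : vert (m, sg) = fun j => (if sg then ρ else -ρ) * (if j = m then 1 else 0) := rfl
    simp only [GT, gTop, hv1]
    rw [show n + 2 - 1 = n + 1 from rfl]
    congr 1
    congr 1
    · exact Finset.sum_congr rfl fun j _ => by rw [hg]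
    · exact Finset.sum_congr rfl fun j _ => by rw [hg]
  have step4 : ∀ v ∈ sF, gTop r W b (n + 2) y k x t (if v.2 then ρ else -ρ) v.1 ≤ B := by
    rintro ⟨m, sg⟩ hv
    have hm : m ∈ Finset.range M := by
      simp only [hsF, Finset.mem_product] at hv
      exact hv.1
    have h1 : gTop r W b (n + 2) y k x t (if sg then ρ else -ρ) m ≤ f m := by
      rcases sg <;> simp only [hf] <;> [exact le_max_right _ _; exact le_max_left _ _]
    exact le_trans h1 (Finset.le_sup' f hm)
  have main : ∑ i ∈ Finset.range (r (n + 2)), c i * netZ r W b (n + 2) (x + δ) i ≤ B := by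
    have h5 : ∑ v ∈ sF, lam v * GT r W b x t c n (vert v) ≤ ∑ v ∈ sF, lam v * B := by
      apply Finset.sum_le_sum
      intro v hv
      exact mul_le_mul_of_nonneg_left (le_trans (le_of_eq (step3 v hv)) (step4 v hv)) (hlam v hv)
    rw [← Finset.sum_mul, hsum, one_mul] at h5
    linarith
  obtain ⟨m₀, hm₀, hBm⟩ := Finset.exists_mem_eq_sup' hne f
  calc ((∑ i ∈ Finset.range (r (n + 2)), cVecN y k i * netZ r W b (n + 2) (x + δ) i : ℝ) : EReal)
      ≤ ((f m₀ : ℝ) : EReal) := by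
        rw [EReal.coe_le_coe_iff]
        rw [← hBm]
        exact main
    _ ≤ ⨆ m ∈ Finset.range M, ((max (gTop r W b (n + 2) y k x t ρ m)
          (gTop r W b (n + 2) y k x t (-ρ) m) : ℝ) : EReal) := by
        exact le_iSup₂_of_le m₀ hm₀ (by rw [hf])
end

section
/- Let the index sets I_{cd} ⊆ A × B, for (c,d) ∈ C × D, form a partition of A × B into nonempty sets, and define the MaxPool of x ∈ ℝ^{A×B} by MP(x)_{cd} = max_{i ∈ I_{cd}} x_i. Let p ∈ ℝ^{C×D} with p ≥ 0 entrywise, and define f : ℝ^{A×B} → ℝ by f(x) = Σ_{(c,d)} p_{cd} · MP([x]⁺)_{cd}. Then the convex conjugate f*(z) = sup_{x ∈ ℝ^{A×B}} (⟨z, x⟩ − f(x)) (valued in the extended reals) satisfies: f*(z) = 0 if z ≥ 0 entrywise and Σ_{i ∈ I_{cd}} z_i ≤ p_{cd} for every (c,d), and f*(z) = +∞ otherwise. -/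
/-!
For `z ≥ 0` with `Σ_{i ∈ I k} z_i ≤ p_k`, each block satisfies
`Σ_{i ∈ I k} z_i x_i ≤ (Σ_{i ∈ I k} z_i) · max_{i ∈ I k} [x_i]⁺ ≤ p_k · max_{i ∈ I k} [x_i]⁺`, so
summing over the partition gives `⟨z, x⟩ ≤ f(x)`, with equality at `x = 0`. Otherwise the objective
is linear and increasing along a ray: `x = -t eᵢ` when `z_i < 0` (where `f` vanishes), or
`x = t · 1_{I k}` when `Σ_{i ∈ I k} z_i > p_k` (where `f(x) = p_k t`).
-/

open Finset Function

section Partition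

variable {ι κ M : Type*} [Fintype ι] [Fintype κ] [AddCommMonoid M]

theorem Finset.sum_univ_eq_sum_sum_of_partition (I : κ → Finset ι)
    (hdis : Pairwise (Disjoint on I)) (hcov : ∀ i, ∃ k, i ∈ I k) (f : ι → M) :
    ∑ i, f i = ∑ k, ∑ i ∈ I k, f i := by
  classical
  have huniv : (univ : Finset ι) = univ.biUnion I := by
    ext i
    simpa using hcov i
  rw [huniv, sum_biUnion fun k _ k' _ hkk' => hdis hkk']

end Partition

theorem EReal.iSup_coe_eq_top_of_forall_lt {α : Type*} (g : α → ℝ) (h : ∀ r : ℝ, ∃ x, r < g x) :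
    ⨆ x, (g x : EReal) = ⊤ := by
  refine iSup_eq_top.2 fun b hb => ?_
  obtain ⟨r, hbr, -⟩ := EReal.lt_iff_exists_real_btwn.1 hb
  obtain ⟨x, hx⟩ := h r
  exact ⟨x, hbr.trans (EReal.coe_lt_coe_iff.2 hx)⟩

theorem EReal.iSup_coe_eq_top_of_ray {α : Type*} (g : α → ℝ) (v : ℝ → α) {c : ℝ} (hc : 0 < c)
    (h : ∀ t, 0 ≤ t → g (v t) = c * t) :
    ⨆ x, (g x : EReal) = ⊤ := by
  refine EReal.iSup_coe_eq_top_of_forall_lt g fun r => ⟨v ((|r| + 1) / c), ?_⟩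
  rw [h _ (by positivity), mul_div_cancel₀ _ hc.ne']
  linarith [le_abs_self r]

section MaxPool

variable {ι κ : Type*} [Fintype κ]

noncomputable def reluMaxPool (I : κ → Finset ι) (hne : ∀ k, (I k).Nonempty) (p : κ → ℝ)
    (x : ι → ℝ) : ℝ :=
  ∑ k, p k * (I k).sup' (hne k) (fun i => max (x i) 0)

theorem sum_mul_le_sum_mul_sup'_max_zero (s : Finset ι) (hs : s.Nonempty) {z : ι → ℝ}
    (hz : ∀ i ∈ s, 0 ≤ z i) (x : ι → ℝ) :
    ∑ i ∈ s, z i * x i ≤ (∑ i ∈ s, z i) * s.sup' hs (fun i => max (x i) 0) := by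
  rw [sum_mul]
  refine sum_le_sum fun i hi => mul_le_mul_of_nonneg_left ?_ (hz i hi)
  exact le_sup'_of_le _ hi (le_max_left _ _)

theorem sum_mul_le_reluMaxPool [Fintype ι] (I : κ → Finset ι) (hne : ∀ k, (I k).Nonempty)
    (hdis : Pairwise (Disjoint on I)) (hcov : ∀ i, ∃ k, i ∈ I k) {p : κ → ℝ} {z : ι → ℝ}
    (hz : ∀ i, 0 ≤ z i) (hzp : ∀ k, ∑ i ∈ I k, z i ≤ p k) (x : ι → ℝ) :
    ∑ i, z i * x i ≤ reluMaxPool I hne p x := by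
  rw [reluMaxPool, sum_univ_eq_sum_sum_of_partition I hdis hcov]
  refine sum_le_sum fun k _ =>
    (sum_mul_le_sum_mul_sup'_max_zero _ (hne k) (fun i _ => hz i) x).trans ?_
  obtain ⟨j, hj⟩ := hne k
  exact mul_le_mul_of_nonneg_right (hzp k) (le_sup'_of_le _ hj (le_max_right _ _))

theorem reluMaxPool_of_nonpos (I : κ → Finset ι) (hne : ∀ k, (I k).Nonempty) (p : κ → ℝ)
    {x : ι → ℝ} (hx : ∀ i, x i ≤ 0) : reluMaxPool I hne p x = 0 := by
  refine sum_eq_zero fun k _ => ?_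
  rw [sup'_eq_of_forall _ _ fun i _ => max_eq_right (hx i), mul_zero]

theorem reluMaxPool_ite_mem [DecidableEq ι] (I : κ → Finset ι) (hne : ∀ k, (I k).Nonempty)
    (hdis : Pairwise (Disjoint on I)) (p : κ → ℝ) (k₀ : κ) {t : ℝ} (ht : 0 ≤ t) :
    reluMaxPool I hne p (fun i => if i ∈ I k₀ then t else 0) = p k₀ * t := by
  refine (sum_eq_single k₀ (fun k _ hk => ?_) (by simp)).trans ?_
  · have hout : ∀ i ∈ I k, i ∉ I k₀ := fun i hi => disjoint_left.1 (hdis hk) hi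
    rw [sup'_eq_of_forall (a := 0) _ _ fun i hi => by simp [hout i hi], mul_zero]
  · rw [sup'_eq_of_forall (a := t) _ _ fun i hi => by simp [hi, ht]]

end MaxPool

theorem statement12_general {A B C D : Type*} [Fintype A] [Fintype B] [Fintype C] [Fintype D]
    (I : C × D → Finset (A × B)) (hne : ∀ cd, (I cd).Nonempty)
    (hdis : ∀ cd cd', cd ≠ cd' → Disjoint (I cd) (I cd'))
    (hcov : ∀ i : A × B, ∃ cd, i ∈ I cd)
    (p : C × D → ℝ) (z : A × B → ℝ) :
    (((∀ i, 0 ≤ z i) ∧ ∀ cd, ∑ i ∈ I cd, z i ≤ p cd) →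
        (⨆ x : A × B → ℝ,
          (((∑ i, z i * x i)
            - ∑ cd, p cd * (I cd).sup' (hne cd) (fun i => max (x i) 0) : ℝ) : EReal)) = 0) ∧
      (¬ ((∀ i, 0 ≤ z i) ∧ ∀ cd, ∑ i ∈ I cd, z i ≤ p cd) →
        (⨆ x : A × B → ℝ,
          (((∑ i, z i * x i)
            - ∑ cd, p cd * (I cd).sup' (hne cd) (fun i => max (x i) 0) : ℝ) : EReal)) = ⊤) := by
  classical
  have hf : ∀ x, ∑ cd, p cd * (I cd).sup' (hne cd) (fun i => max (x i) 0) =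
      reluMaxPool I hne p x := fun _ => rfl
  simp only [hf]
  constructor
  · rintro ⟨hz, hzp⟩
    refine le_antisymm (iSup_le fun x => EReal.coe_le_coe_iff.2 ?_) (le_iSup_of_le 0 ?_)
    · exact sub_nonpos.2 (sum_mul_le_reluMaxPool I hne hdis hcov hz hzp x)
    · simp [reluMaxPool_of_nonpos I hne p (x := 0) fun _ => le_rfl]
  · intro h
    rcases not_and_or.1 h with hz | hzp
    · obtain ⟨i₀, hi₀⟩ := not_forall.1 hz
      refine EReal.iSup_coe_eq_top_of_ray _ (fun t i => if i = i₀ then -t else 0)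
        (neg_pos.2 (not_le.1 hi₀)) fun t ht => ?_
      rw [reluMaxPool_of_nonpos I hne p fun i => by split_ifs <;> linarith]
      simp
    · obtain ⟨k₀, hk₀⟩ := not_forall.1 hzp
      refine EReal.iSup_coe_eq_top_of_ray _ (fun t i => if i ∈ I k₀ then t else 0)
        (sub_pos.2 (not_le.1 hk₀)) fun t ht => ?_
      rw [reluMaxPool_ite_mem I hne hdis p k₀ ht]
      simp [mul_ite, sum_ite_mem, ← sum_mul, sub_mul]

/-- Lemma 9a: conjugate of `f(x) = Σ_{(c,d)} p_{cd} · MaxPool([x]⁺)_{cd}` for `p ≥ 0`, where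
the pooling regions `I cd` partition `A × B` into nonempty sets:  `f*(z) = 0` if `z ≥ 0`
entrywise and `Σ_{i ∈ I cd} z_i ≤ p_{cd}` for every `(c,d)`, and `f*(z) = +∞` otherwise. -/
theorem statement12 {A B C D : Type*} [Fintype A] [Fintype B] [Fintype C] [Fintype D]
    (I : C × D → Finset (A × B)) (hne : ∀ cd, (I cd).Nonempty)
    (hdis : ∀ cd cd', cd ≠ cd' → Disjoint (I cd) (I cd'))
    (hcov : ∀ i : A × B, ∃ cd, i ∈ I cd)
    (p : C × D → ℝ) (hp : ∀ cd, 0 ≤ p cd) (z : A × B → ℝ) :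
    (((∀ i, 0 ≤ z i) ∧ ∀ cd, ∑ i ∈ I cd, z i ≤ p cd) →
        (⨆ x : A × B → ℝ,
          (((∑ i, z i * x i)
            - ∑ cd, p cd * (I cd).sup' (hne cd) (fun i => max (x i) 0) : ℝ) : EReal)) = 0) ∧
      (¬ ((∀ i, 0 ≤ z i) ∧ ∀ cd, ∑ i ∈ I cd, z i ≤ p cd) →
        (⨆ x : A × B → ℝ,
          (((∑ i, z i * x i)
            - ∑ cd, p cd * (I cd).sup' (hne cd) (fun i => max (x i) 0) : ℝ) : EReal)) = ⊤) :=
  statement12_general I hne hdis hcov p z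
end

section
/- Let the index sets I_{cd} ⊆ A × B, for (c,d) ∈ C × D, form a partition of A × B into nonempty sets, and define the MaxPool of x ∈ ℝ^{A×B} by MP(x)_{cd} = max_{i ∈ I_{cd}} x_i. Let u ∈ ℝ^{A×B} and q ∈ ℝ^{C×D} with u ≥ 0 and q ≥ 0 entrywise, and define g : ℝ^{A×B} → ℝ by g(x) = ⟨x, u⟩ − Σ_{(c,d)} q_{cd} · MP([x]⁺)_{cd}. Then the concave conjugate g_*(z) = inf_{x ∈ ℝ^{A×B}} (⟨z, x⟩ − g(x)) (valued in the extended reals) satisfies: g_*(z) = 0 if z ≤ u entrywise and Σ_{i ∈ I_{cd}} (u_i − z_i) ≤ q_{cd} for every (c,d), and g_*(z) = −∞ otherwise. -/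
/-- Lemma 9b: concave conjugate of `g(x) = ⟨x, u⟩ - Σ_{(c,d)} q_{cd} · MaxPool([x]⁺)_{cd}` for
`u, q ≥ 0`, where the pooling regions `I cd` partition `A × B` into nonempty sets:
`g_*(z) = 0` if `z ≤ u` entrywise and `Σ_{i ∈ I cd} (u_i - z_i) ≤ q_{cd}` for every `(c,d)`,
and `g_*(z) = -∞` otherwise. -/
theorem statement13 {A B C D : Type*} [Fintype A] [Fintype B] [Fintype C] [Fintype D]
    (I : C × D → Finset (A × B)) (hne : ∀ cd, (I cd).Nonempty)
    (hdis : ∀ cd cd', cd ≠ cd' → Disjoint (I cd) (I cd'))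
    (hcov : ∀ i : A × B, ∃ cd, i ∈ I cd)
    (u : A × B → ℝ) (q : C × D → ℝ) (hu : ∀ i, 0 ≤ u i) (hq : ∀ cd, 0 ≤ q cd)
    (z : A × B → ℝ) :
    (((∀ i, z i ≤ u i) ∧ ∀ cd, ∑ i ∈ I cd, (u i - z i) ≤ q cd) →
        (⨅ x : A × B → ℝ,
          (((∑ i, z i * x i)
            - ((∑ i, x i * u i)
              - ∑ cd, q cd * (I cd).sup' (hne cd) (fun i => max (x i) 0)) : ℝ) : EReal)) = 0) ∧
      (¬ ((∀ i, z i ≤ u i) ∧ ∀ cd, ∑ i ∈ I cd, (u i - z i) ≤ q cd) →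
        (⨅ x : A × B → ℝ,
          (((∑ i, z i * x i)
            - ((∑ i, x i * u i)
              - ∑ cd, q cd * (I cd).sup' (hne cd) (fun i => max (x i) 0)) : ℝ) : EReal)) = ⊥) := by
  classical
  set F : (A × B → ℝ) → ℝ := fun x =>
    (∑ i, z i * x i)
      - ((∑ i, x i * u i)
        - ∑ cd, q cd * (I cd).sup' (hne cd) (fun i => max (x i) 0)) with hF
  -- partition of sums over A × B
  have hpart : ∀ (g : A × B → ℝ), ∑ i, g i = ∑ cd, ∑ i ∈ I cd, g i := by
    intro g
    have hU : Finset.univ.biUnion I = Finset.univ := by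
      ext i; simpa using hcov i
    calc ∑ i, g i = ∑ i ∈ Finset.univ.biUnion I, g i := by rw [hU]
      _ = ∑ cd, ∑ i ∈ I cd, g i :=
        Finset.sum_biUnion (fun c _ c' _ h => hdis c c' h)
  -- F at 0 is 0
  have hF0 : F 0 = 0 := by
    simp [hF, Finset.sup'_const]
  -- helper for part 2
  have hbot : (∀ r : ℝ, ∃ x : A × B → ℝ, F x ≤ r) →
      (⨅ x : A × B → ℝ, ((F x : ℝ) : EReal)) = ⊥ := by
    intro h
    rw [iInf_eq_bot]
    intro b hb
    obtain ⟨r, hr1, hr2⟩ := EReal.lt_iff_exists_real_btwn.mp hb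
    obtain ⟨x, hx⟩ := h (r - 1)
    refine ⟨x, lt_trans ?_ hr2⟩
    exact_mod_cast lt_of_le_of_lt hx (by linarith)
  constructor
  · rintro ⟨hz, hsum⟩
    show (⨅ x : A × B → ℝ, ((F x : ℝ) : EReal)) = 0
    apply le_antisymm
    · have := iInf_le (fun x : A × B → ℝ => ((F x : ℝ) : EReal)) 0
      simpa [hF0] using this
    · refine le_iInf fun x => ?_
      rw [show ((0 : EReal)) = ((0 : ℝ) : EReal) by norm_num, EReal.coe_le_coe_iff]
      set M : C × D → ℝ := fun cd => (I cd).sup' (hne cd) (fun i => max (x i) 0) with hM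
      have hM0 : ∀ cd, 0 ≤ M cd := fun cd =>
        le_trans (le_max_right (x (hne cd).choose) 0)
          (Finset.le_sup' (fun i => max (x i) 0) (hne cd).choose_spec)
      have hkey : ∀ cd, -(q cd * M cd) ≤ ∑ i ∈ I cd, (z i * x i - x i * u i) := by
        intro cd
        have h1 : ∀ i ∈ I cd, (z i - u i) * M cd ≤ z i * x i - x i * u i := by
          intro i hi
          have hxM : x i ≤ M cd :=
            le_trans (le_max_left _ _) (Finset.le_sup' (fun i => max (x i) 0) hi)
          nlinarith [hz i]
        have h2 : (∑ i ∈ I cd, (z i - u i)) * M cd ≤ ∑ i ∈ I cd, (z i * x i - x i * u i) := by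
          rw [Finset.sum_mul]
          exact Finset.sum_le_sum h1
        have h3 : (∑ i ∈ I cd, (u i - z i)) * M cd ≤ q cd * M cd :=
          mul_le_mul_of_nonneg_right (hsum cd) (hM0 cd)
        have h4 : (∑ i ∈ I cd, (z i - u i)) = -(∑ i ∈ I cd, (u i - z i)) := by
          rw [← Finset.sum_neg_distrib]; simp
        rw [h4] at h2; nlinarith
      have h5 : ∑ i, (z i * x i - x i * u i) = ∑ cd, ∑ i ∈ I cd, (z i * x i - x i * u i) :=
        hpart _
      have h6 : ∑ cd, -(q cd * M cd) ≤ ∑ cd, ∑ i ∈ I cd, (z i * x i - x i * u i) :=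
        Finset.sum_le_sum fun cd _ => hkey cd
    -- conclude
      have h7 : F x = ∑ i, (z i * x i - x i * u i) + ∑ cd, q cd * M cd := by
        rw [hF]; rw [Finset.sum_sub_distrib]; ring
      rw [h7, h5]
      have h8 : ∑ cd, -(q cd * M cd) = -(∑ cd, q cd * M cd) := by
        rw [← Finset.sum_neg_distrib]
      linarith [h6, h8 ▸ h6]
  · intro hcond
    show (⨅ x : A × B → ℝ, ((F x : ℝ) : EReal)) = ⊥
    apply hbot
    intro r
    by_cases h1 : ∀ i, z i ≤ u i
    · -- some pooling constraint violated
      have h2 : ∃ cd, q cd < ∑ i ∈ I cd, (u i - z i) := by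
        by_contra h
        push_neg at h
        exact hcond ⟨h1, fun cd => h cd⟩
      obtain ⟨cd₀, hcd₀⟩ := h2
      set ε : ℝ := (∑ i ∈ I cd₀, (u i - z i)) - q cd₀ with hε
      have hεpos : 0 < ε := by rw [hε]; linarith
      set t : ℝ := max 0 ((-r) / ε) with ht
      have ht0 : 0 ≤ t := le_max_left _ _
      have htr : -r ≤ t * ε := by
        have : (-r) / ε ≤ t := le_max_right _ _
        calc -r = ((-r) / ε) * ε := by field_simp
          _ ≤ t * ε := mul_le_mul_of_nonneg_right this hεpos.le
      refine ⟨fun i => if i ∈ I cd₀ then t else 0, ?_⟩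
      set x : A × B → ℝ := fun i => if i ∈ I cd₀ then t else 0 with hx
      have hxs : ∀ (g : A × B → ℝ), ∑ i, g i * x i = (∑ i ∈ I cd₀, g i) * t := by
        intro g
        rw [Finset.sum_mul]
        rw [show ∑ i, g i * x i = ∑ i, if i ∈ I cd₀ then g i * t else 0 by
          apply Finset.sum_congr rfl; intro i _; simp only [hx, mul_ite, mul_zero]]
        rw [Finset.sum_ite_mem]
        simp
      have hsup0 : ∀ cd, cd ≠ cd₀ →
          (I cd).sup' (hne cd) (fun i => max (x i) 0) = 0 := by
        intro cd hcd
        have hfun : ∀ i ∈ I cd, max (x i) 0 = (fun _ : A × B => (0 : ℝ)) i := by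
          intro i hi
          have : i ∉ I cd₀ := Finset.disjoint_left.mp (hdis cd cd₀ hcd) hi
          simp [hx, this]
        rw [Finset.sup'_congr (hne cd) rfl hfun, Finset.sup'_const]
      have hsupt : (I cd₀).sup' (hne cd₀) (fun i => max (x i) 0) = t := by
        have hfun : ∀ i ∈ I cd₀, max (x i) 0 = (fun _ : A × B => t) i := by
          intro i hi
          simp [hx, hi, max_eq_left ht0]
        rw [Finset.sup'_congr (hne cd₀) rfl hfun, Finset.sup'_const]
      have hqsum : ∑ cd, q cd * (I cd).sup' (hne cd) (fun i => max (x i) 0)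
          = q cd₀ * t := by
        rw [Finset.sum_eq_single_of_mem cd₀ (Finset.mem_univ _)]
        · rw [hsupt]
        · intro cd _ hcd
          rw [hsup0 cd hcd, mul_zero]
      have hFx : F x = -(t * ε) := by
        rw [hF]
        simp only
        rw [hqsum]
        rw [show ∑ i, z i * x i = (∑ i ∈ I cd₀, z i) * t from hxs z]
        rw [show ∑ i, x i * u i = (∑ i ∈ I cd₀, u i) * t from by
          rw [← hxs u]; apply Finset.sum_congr rfl; intro i _; ring]
        rw [hε]
        rw [Finset.sum_sub_distrib]
        ring
      rw [hFx]; linarith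
    · push_neg at h1
      obtain ⟨i₀, hi₀⟩ := h1
      set ε : ℝ := z i₀ - u i₀ with hε
      have hεpos : 0 < ε := by rw [hε]; linarith
      set t : ℝ := max 0 ((-r) / ε) with ht
      have ht0 : 0 ≤ t := le_max_left _ _
      have htr : -r ≤ t * ε := by
        have : (-r) / ε ≤ t := le_max_right _ _
        calc -r = ((-r) / ε) * ε := by field_simp
          _ ≤ t * ε := mul_le_mul_of_nonneg_right this hεpos.le
      refine ⟨fun i => if i = i₀ then -t else 0, ?_⟩
      set x : A × B → ℝ := fun i => if i = i₀ then -t else 0 with hx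
      have hxs : ∀ (g : A × B → ℝ), ∑ i, g i * x i = g i₀ * (-t) := by
        intro g
        rw [show ∑ i, g i * x i = ∑ i, if i = i₀ then g i * (-t) else 0 by
          apply Finset.sum_congr rfl; intro i _; simp only [hx, mul_ite, mul_zero]]
        rw [Finset.sum_ite_eq' Finset.univ i₀ (fun i => g i * (-t))]
        simp
      have hsup0 : ∀ cd, (I cd).sup' (hne cd) (fun i => max (x i) 0) = 0 := by
        intro cd
        have hfun : ∀ i ∈ I cd, max (x i) 0 = (fun _ : A × B => (0 : ℝ)) i := by
          intro i _
          simp only [hx]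
          split
          · simp [max_eq_right (by linarith : -t ≤ 0)]
          · simp
        rw [Finset.sup'_congr (hne cd) rfl hfun, Finset.sup'_const]
      have hFx : F x = -(t * ε) := by
        rw [hF]
        simp only
        rw [show ∑ i, z i * x i = z i₀ * (-t) from hxs z]
        rw [show ∑ i, x i * u i = u i₀ * (-t) from by
          rw [← hxs u]; apply Finset.sum_congr rfl; intro i _; ring]
        rw [show ∑ cd, q cd * (I cd).sup' (hne cd) (fun i => max (x i) 0) = 0 from by
          apply Finset.sum_eq_zero; intro cd _; rw [hsup0]; ring]
        rw [hε]; ring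
      rw [hFx]; linarith
end
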